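/- arXiv:2210.02568 — 9 statements merged into one kernel-verified Lean document; each statement's English description precedes it below -/
import Mathlib

section
/- Let f be a symbol with vanishing Ω-oscillation and let T ∈ B(L²(X)) be the quantization Op(f) of f. Then for every operator L ∈ 𝔻^Ω one has ‖T − L‖ ≥ D^Ω(f); equivalently, the distance in operator norm from Op(f) to the subspace 𝔻^Ω is at least D^Ω(f). -/
open MeasureTheory Filter Topology

open scoped ENNReal
set_option linter.unusedSectionVars false
set_option maxHeartbeats 2000000

section Helpers

variable {α : Type*} [MeasurableSpace α] {μ : Measure α} [IsProbabilityMeasure μ]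

lemma gohberg_aux_bound {h : α → ℂ} {b : ℝ} (hb : ∀ x, ‖h x‖ ≤ b) :
    eLpNorm h 2 μ ≤ ENNReal.ofReal b := by
  have := eLpNorm_le_of_ae_bound (μ := μ) (p := 2) (f := h) (Eventually.of_forall hb)
  simpa [measure_univ] using this

lemma gohberg_aux_ne_top {h : α → ℂ} {b : ℝ} (hb : ∀ x, ‖h x‖ ≤ b) :
    eLpNorm h 2 μ ≠ ∞ :=
  ((gohberg_aux_bound hb).trans_lt ENNReal.ofReal_lt_top).ne

lemma gohberg_aux_toReal_le [Nonempty α] {h : α → ℂ} {b : ℝ} (hb : ∀ x, ‖h x‖ ≤ b) :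
    (eLpNorm h 2 μ).toReal ≤ b := by
  have hb0 : 0 ≤ b := le_trans (norm_nonneg _) (hb (Classical.arbitrary α))
  exact ENNReal.toReal_le_of_le_ofReal hb0 (gohberg_aux_bound hb)

lemma gohberg_aux_mono {h g : α → ℂ} (hle : ∀ x, ‖h x‖ ≤ ‖g x‖)
    (hg : eLpNorm g 2 μ ≠ ∞) :
    (eLpNorm h 2 μ).toReal ≤ (eLpNorm g 2 μ).toReal :=
  ENNReal.toReal_mono hg (eLpNorm_mono_ae (Eventually.of_forall hle))

lemma gohberg_aux_tri {h g : α → ℂ} (hh : AEStronglyMeasurable h μ)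
    (hg : AEStronglyMeasurable g μ) (hfh : eLpNorm h 2 μ ≠ ∞) (hfg : eLpNorm g 2 μ ≠ ∞) :
    (eLpNorm (fun x => h x + g x) 2 μ).toReal
      ≤ (eLpNorm h 2 μ).toReal + (eLpNorm g 2 μ).toReal := by
  have h1 : eLpNorm (fun x => h x + g x) 2 μ ≤ eLpNorm h 2 μ + eLpNorm g 2 μ :=
    eLpNorm_add_le hh hg one_le_two
  have h2 := ENNReal.toReal_mono (by simp [ENNReal.add_ne_top, hfh, hfg]) h1
  rwa [ENNReal.toReal_add hfh hfg] at h2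

lemma gohberg_aux_unimodular {h z : α → ℂ} (hz : ∀ x, ‖z x‖ = 1) :
    eLpNorm (fun x => h x * z x) 2 μ = eLpNorm h 2 μ :=
  eLpNorm_congr_norm_ae (Eventually.of_forall fun x => by rw [norm_mul, hz, mul_one])

lemma gohberg_aux_coeFn_sum {ι : Type*} (s : Finset ι) (v : ι → Lp ℂ 2 μ) (F : ι → α → ℂ)
    (hv : ∀ i ∈ s, ⇑(v i) =ᵐ[μ] F i) :
    ⇑(∑ i ∈ s, v i) =ᵐ[μ] fun x => ∑ i ∈ s, F i x := by
  classical
  induction s using Finset.induction_on with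
  | empty => simp only [Finset.sum_empty]; exact Lp.coeFn_zero (E := ℂ) (p := 2) (μ := μ)
  | insert _ _ hnotmem ih =>
    rename_i a s
    rw [Finset.sum_insert hnotmem]
    filter_upwards [Lp.coeFn_add (v a) (∑ i ∈ s, v i), hv a (by simp),
      ih fun i hi => hv i (by simp [hi])] with x hx1 hx2 hx3
    simp only [hx1, Pi.add_apply, hx2, hx3, Finset.sum_insert hnotmem]

lemma gohberg_aux_coeFn_csum {ι : Type*} (s : Finset ι) (c : ι → ℂ) (v : ι → Lp ℂ 2 μ)
    (F : ι → α → ℂ) (hv : ∀ i ∈ s, ⇑(v i) =ᵐ[μ] F i) :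
    ⇑(∑ i ∈ s, c i • v i) =ᵐ[μ] fun x => ∑ i ∈ s, c i * F i x := by
  refine gohberg_aux_coeFn_sum s (fun i => c i • v i) (fun i x => c i * F i x) fun i hi => ?_
  filter_upwards [Lp.coeFn_smul (c i) (v i), hv i hi] with x hx1 hx2
  simp [hx1, hx2]

end Helpers

lemma gohberg_aux_neBot {γ : Type*} [TopologicalSpace γ] [DiscreteTopology γ]
    (Ω : Set (StoneCech γ)) (hne : Ω.Nonempty) :
    (Filter.comap stoneCechUnit (𝓝ˢ Ω)).NeBot := by
  rw [Filter.comap_neBot_iff]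
  intro t ht
  obtain ⟨ω, hω⟩ := hne
  have ht' : t ∈ 𝓝 ω := (nhds_le_nhdsSet hω) ht
  obtain ⟨a, ha⟩ := denseRange_stoneCechUnit.exists_mem_open isOpen_interior
    ⟨ω, mem_interior_iff_mem_nhds.2 ht'⟩
  exact ⟨a, interior_subset ha⟩

lemma gohberg_aux_tendsto_mul {γ : Type*} [CommGroup γ] [TopologicalSpace γ]
    [DiscreteTopology γ] (Ω : Set (StoneCech γ)) (η : γ)
    (hinv : stoneCechExtend (continuous_of_discreteTopology
        (f := fun ξ : γ => stoneCechUnit (η * ξ))) '' Ω ⊆ Ω) :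
    Filter.Tendsto (fun ξ : γ => η * ξ) (Filter.comap stoneCechUnit (𝓝ˢ Ω))
      (Filter.comap stoneCechUnit (𝓝ˢ Ω)) := by
  rw [Filter.tendsto_comap_iff]
  have hc : Continuous (fun ξ : γ => stoneCechUnit (η * ξ)) := continuous_of_discreteTopology
  have hfun : (stoneCechUnit ∘ fun ξ : γ => η * ξ)
      = stoneCechExtend hc ∘ stoneCechUnit := by
    funext ξ
    exact (congrFun (stoneCechExtend_extends hc) ξ).symm
  rw [hfun]
  exact ((continuous_stoneCechExtend hc).tendsto_nhdsSet (Set.mapsTo_iff_image_subset.mpr hinv)).comp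
    Filter.tendsto_comap

lemma gohberg_aux_eventually_lt {γ : Type*} {F : Filter γ} {ψ : γ → ℝ} {C ε : ℝ}
    (hb : ∀ x, ψ x ≤ C) (h0 : Filter.limsup ψ F = 0) (hε : 0 < ε) :
    ∀ᶠ x in F, ψ x < ε :=
  Filter.eventually_lt_of_limsup_lt (by rw [h0]; exact hε)
    (Filter.isBoundedUnder_of ⟨C, hb⟩)

lemma gohberg_aux_bump {X : Type*} [TopologicalSpace X] [CompactSpace X] [T2Space X]
    [MeasurableSpace X] [BorelSpace X] (μ : Measure X) [IsProbabilityMeasure μ]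
    [μ.IsOpenPosMeasure] (U : Set X) (hU : IsOpen U) (x₀ : X) (hx₀ : x₀ ∈ U) :
    ∃ g : C(X, ℝ), (∀ x ∉ U, g x = 0) ∧ (∀ x, 0 ≤ g x ∧ g x ≤ 1) ∧
      0 < (eLpNorm (fun x => (g x : ℂ)) 2 μ).toReal := by
  obtain ⟨g, hg0, hg1, hg01⟩ := exists_continuous_zero_one_of_isClosed
    hU.isClosed_compl isClosed_singleton
    (by rwa [Set.disjoint_compl_left_iff_subset, Set.singleton_subset_iff])
  have hgcont : Continuous fun x => (g x : ℂ) := Complex.continuous_ofReal.comp g.continuous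
  refine ⟨g, fun x hx => hg0 hx, fun x => ⟨(hg01 x).1, (hg01 x).2⟩, ?_⟩
  have hne : eLpNorm (fun x => (g x : ℂ)) 2 μ ≠ 0 := by
    rw [Ne, eLpNorm_eq_zero_iff hgcont.aestronglyMeasurable two_ne_zero]
    intro h
    have : (fun x => (g x : ℂ)) = fun _ => (0 : ℂ) :=
      (Continuous.ae_eq_iff_eq μ hgcont continuous_const).mp h
    have h1 : (g x₀ : ℂ) = 0 := congrFun this x₀
    rw [hg1 rfl] at h1
    norm_num at h1
  have hfin : eLpNorm (fun x => (g x : ℂ)) 2 μ ≠ ∞ := by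
    refine ((eLpNorm_le_of_ae_bound (C := 1) (Eventually.of_forall fun x => ?_)).trans_lt
      (by simp [measure_univ])).ne
    simpa [Complex.norm_real, Real.norm_eq_abs, abs_le] using ⟨by linarith [(hg01 x).1], (hg01 x).2⟩
  exact ENNReal.toReal_pos hne hfin

/-- **Anisotropic Gohberg Lemma** (Theorem 3.1 / `titus`).
`X` is a compact Hausdorff abelian group with normalized Haar (probability) measure `μ`,
`Ξ = PontryaginDual X` its (discrete) dual, whose characters form a Hilbert basis `B` of
`L²(X)`.  `Ω` is a nonempty closed invariant subset of the corona `βΞ \ Ξ` of the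
Stone–Čech compactification of `Ξ`, and `𝓕_Ω = comap stoneCechUnit (𝓝ˢ Ω)` is the filter
of traces on `Ξ` of neighborhoods of `Ω`.  If `f` is a symbol with vanishing
`Ω`-oscillation and `T = Op f` its quantization, then for every `L` in `𝔻^Ω` (the closed
linear span of the operators `φ(Q)ψ(P)` with `φ ∈ C(X)`, `ψ ∈ ℓ^{∞,Ω}(Ξ)`) one has
`‖T - L‖ ≥ D^Ω(f) = limsup_{ξ → Ω} sup_x |f(x,ξ)|`. -/
theorem gohberg_lemma_anisotropic
    {X : Type} [CommGroup X] [TopologicalSpace X] [IsTopologicalGroup X]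
    [CompactSpace X] [T2Space X] [MeasurableSpace X] [BorelSpace X]
    (μ : Measure X) [μ.IsHaarMeasure] [IsProbabilityMeasure μ]
    [DiscreteTopology (PontryaginDual X)]
    -- the characters form an orthonormal Hilbert basis of `L²(X)`
    (B : HilbertBasis (PontryaginDual X) ℂ (Lp ℂ 2 μ))
    (hB : ∀ ζ : PontryaginDual X, ⇑(B ζ) =ᵐ[μ] fun x => (ζ x : ℂ))
    -- `Ω` : a nonempty closed invariant subset of the corona `βΞ \ Ξ`
    (Ω : Set (StoneCech (PontryaginDual X)))
    (hΩne : Ω.Nonempty) (hΩcl : IsClosed Ω)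
    (hΩcorona : Ω ⊆ (Set.range
      (stoneCechUnit : PontryaginDual X → StoneCech (PontryaginDual X)))ᶜ)
    (hΩinv : ∀ η : PontryaginDual X,
      stoneCechExtend (continuous_of_discreteTopology
        (f := fun ξ : PontryaginDual X => stoneCechUnit (η * ξ))) '' Ω ⊆ Ω)
    -- `f` is a symbol : bounded, and continuous in `x` uniformly in `ξ`
    (f : X → PontryaginDual X → ℂ)
    (hfb : ∃ C, ∀ x ξ, ‖f x ξ‖ ≤ C)
    (hfc : ∀ ε > 0, ∀ x₀ : X, ∀ᶠ x in 𝓝 x₀, ∀ ξ, ‖f x ξ - f x₀ ξ‖ < ε)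
    -- `f` has vanishing `Ω`-oscillation
    (hosc : ∀ ζ : PontryaginDual X,
      Filter.limsup (fun ξ => ⨆ x : X, ‖f x (ξ * ζ) - f x ξ‖)
        (Filter.comap stoneCechUnit (𝓝ˢ Ω)) = 0)
    -- `T = Op f` is the quantization of `f`
    (T : Lp ℂ 2 μ →L[ℂ] Lp ℂ 2 μ)
    (hT : ∀ ζ : PontryaginDual X, ⇑(T (B ζ)) =ᵐ[μ] fun x => f x ζ * (ζ x : ℂ)) :
    -- conclusion : `dist (Op f) 𝔻^Ω ≥ D^Ω(f)`
    ∀ L ∈ closure (↑(Submodule.span ℂ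
        {L : Lp ℂ 2 μ →L[ℂ] Lp ℂ 2 μ | ∃ φ : C(X, ℂ), ∃ ψ : PontryaginDual X → ℂ,
          (∃ C, ∀ ξ, ‖ψ ξ‖ ≤ C) ∧
          Filter.limsup (fun ξ => ‖ψ ξ‖)
            (Filter.comap stoneCechUnit (𝓝ˢ Ω)) = 0 ∧
          ∀ ζ : PontryaginDual X,
            ⇑(L (B ζ)) =ᵐ[μ] fun x => ψ ζ * φ x * (ζ x : ℂ)}) : Set _),
      Filter.limsup (fun ξ => ⨆ x : X, ‖f x ξ‖)
        (Filter.comap stoneCechUnit (𝓝ˢ Ω)) ≤ ‖T - L‖ := by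
  classical
  intro L hL
  set F := Filter.comap (stoneCechUnit (α := PontryaginDual X)) (𝓝ˢ Ω) with hFdef
  haveI hFne : F.NeBot := gohberg_aux_neBot Ω hΩne
  obtain ⟨C₀, hC₀⟩ := hfb
  set C : ℝ := max C₀ 1 with hCdef
  have hC1 : (1:ℝ) ≤ C := le_max_right _ _
  have hfC : ∀ x ξ, ‖f x ξ‖ ≤ C := fun x ξ => by
    exact (hC₀ x ξ).trans (le_max_left _ _)
  set s : PontryaginDual X → ℝ := fun ξ => ⨆ x : X, ‖f x ξ‖ with hsdef
  have hbdd : ∀ ξ, BddAbove (Set.range fun x => ‖f x ξ‖) := fun ξ =>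
    ⟨C, by rintro y ⟨x, rfl⟩; dsimp only; exact hfC x ξ⟩
  have habs_le_s : ∀ x ξ, ‖f x ξ‖ ≤ s ξ := fun x ξ => le_ciSup (hbdd ξ) x
  have hsle : ∀ ξ, s ξ ≤ C := fun ξ =>
    ciSup_le fun x => by exact hfC x ξ
  have hs0 : ∀ ξ, 0 ≤ s ξ := fun ξ =>
    (norm_nonneg _).trans (habs_le_s (Classical.arbitrary X) ξ)
  -- continuity of `f` in `x`
  have hfcont : ∀ ξ, Continuous fun x => f x ξ := by
    intro ξ
    rw [continuous_iff_continuousAt]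
    intro x₀
    rw [ContinuousAt, Metric.tendsto_nhds]
    intro δ hδ
    filter_upwards [hfc δ hδ x₀] with x hx
    rw [Complex.dist_eq]; exact hx ξ
  -- the oscillation functions
  set osc : PontryaginDual X → PontryaginDual X → ℝ :=
    fun η ζ => ⨆ x : X, ‖f x (ζ * η) - f x ζ‖ with hoscdef
  have hoscbdd : ∀ η ζ, BddAbove (Set.range fun x => ‖f x (ζ * η) - f x ζ‖) :=
    fun η ζ => ⟨2 * C, by
      rintro y ⟨x, rfl⟩
      dsimp only
      calc ‖f x (ζ * η) - f x ζ‖ ≤ ‖f x (ζ * η)‖ + ‖f x ζ‖ := norm_sub_le _ _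
        _ ≤ 2 * C := by linarith [hfC x (ζ * η), hfC x ζ]⟩
  have hoscle : ∀ η ζ, osc η ζ ≤ 2 * C := fun η ζ =>
    ciSup_le fun x => by
      calc ‖f x (ζ * η) - f x ζ‖ ≤ ‖f x (ζ * η)‖ + ‖f x ζ‖ := norm_sub_le _ _
        _ ≤ 2 * C := by linarith [hfC x (ζ * η), hfC x ζ]
  have habs_le_osc : ∀ η ζ x, ‖f x (ζ * η) - f x ζ‖ ≤ osc η ζ :=
    fun η ζ x => le_ciSup (hoscbdd η ζ) x
  have hosc0 : ∀ η, Filter.limsup (osc η) F = 0 := fun η => hosc η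
  -- multiplicativity/unimodularity of characters
  have hmul : ∀ (η ζ : PontryaginDual X) (x : X), ((η * ζ) x : ℂ) = (η x : ℂ) * (ζ x : ℂ) := by
    intro η ζ x
    show (((η * ζ : ContinuousMonoidHom X Circle) x : Circle) : ℂ) = _
    norm_cast
  have hchar1 : ∀ (ζ : PontryaginDual X) (x : X), ‖(ζ x : ℂ)‖ = 1 := fun ζ x => by
    rw [Circle.norm_coe]
  have hcharcont : ∀ ζ : PontryaginDual X, Continuous fun x => (ζ x : ℂ) := fun ζ =>
    continuous_subtype_val.comp (map_continuous ζ)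
  -- reduction to an `ε`-statement
  refine le_of_forall_pos_le_add fun ε hε => ?_
  set ε₁ := min (1/2 : ℝ) (ε / (9 + C + ‖T - L‖)) with hε₁def
  have hden : (0:ℝ) < 9 + C + ‖T - L‖ := by positivity
  have hε₁pos : 0 < ε₁ := lt_min (by norm_num) (div_pos hε hden)
  have hε₁half : ε₁ ≤ 1/2 := min_le_left _ _
  have hε₁key : ε₁ * (9 + C + ‖T - L‖) ≤ ε := by
    calc ε₁ * (9 + C + ‖T - L‖) ≤ (ε / (9 + C + ‖T - L‖)) * (9 + C + ‖T - L‖) :=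
          mul_le_mul_of_nonneg_right (min_le_right _ _) hden.le
      _ = ε := div_mul_cancel₀ _ hden.ne'
  -- choose `L'` in the algebraic span, `ε₁`-close to `L`
  obtain ⟨L', hL'mem, hLL'd⟩ := Metric.mem_closure_iff.mp hL ε₁ hε₁pos
  rw [dist_eq_norm] at hLL'd
  obtain ⟨n, aa, ops, hops⟩ := Submodule.mem_span_set'.mp hL'mem
  choose φs ψs hψbdd hψ0 hψact using fun k : Fin n => (ops k).2
  choose Cψ hCψ using hψbdd
  -- the equicontinuity covering
  have hVmem : ∀ x₀ : X, {x | ∀ ξ, ‖f x ξ - f x₀ ξ‖ < ε₁} ∈ 𝓝 x₀ :=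
    fun x₀ => hfc ε₁ hε₁pos x₀
  set V : X → Set X := fun x₀ => interior {x | ∀ ξ, ‖f x ξ - f x₀ ξ‖ < ε₁}
    with hVdef
  have hVopen : ∀ x₀, IsOpen (V x₀) := fun _ => isOpen_interior
  have hVself : ∀ x₀, x₀ ∈ V x₀ := fun x₀ => mem_interior_iff_mem_nhds.2 (hVmem x₀)
  have hVprop : ∀ x₀, ∀ y ∈ V x₀, ∀ ξ, ‖f y ξ - f x₀ ξ‖ < ε₁ :=
    fun x₀ y hy => interior_subset hy
  obtain ⟨t, -, htcov⟩ := isCompact_univ.elim_nhds_subcover V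
    (fun x _ => (hVopen x).mem_nhds (hVself x))
  -- bump functions and their trigonometric approximations
  have hdata : ∀ x₀ : X, ∃ (g : C(X, ℝ)) (c : PontryaginDual X →₀ ℂ),
      (∀ x ∉ V x₀, g x = 0) ∧ (∀ x, 0 ≤ g x ∧ g x ≤ 1) ∧
      0 < (eLpNorm (fun x => (g x : ℂ)) 2 μ).toReal ∧
      (eLpNorm (fun x => (∑ η ∈ c.support, c η * (η x : ℂ)) -
          (((eLpNorm (fun x => (g x : ℂ)) 2 μ).toReal : ℂ))⁻¹ * g x) 2 μ).toReal < ε₁ := by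
    intro x₀
    obtain ⟨g, hg0, hg01, hgpos⟩ := gohberg_aux_bump μ (V x₀) (hVopen x₀) x₀ (hVself x₀)
    have hgcont : Continuous fun x => (g x : ℂ) := Complex.continuous_ofReal.comp g.continuous
    have hgmem : MemLp (fun x => (g x : ℂ)) 2 μ := by
      refine MemLp.of_bound hgcont.aestronglyMeasurable 1 (Eventually.of_forall fun x => ?_)
      rw [Complex.norm_real, Real.norm_eq_abs, abs_le]
      exact ⟨by linarith [(hg01 x).1], (hg01 x).2⟩
    set w := hgmem.toLp _ with hwdef
    set W := (eLpNorm (fun x => (g x : ℂ)) 2 μ).toReal with hWdef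
    have hdense : (((W : ℂ))⁻¹ • w) ∈ closure (↑(Submodule.span ℂ (Set.range ⇑B)) : Set _) := by
      have h1 : (((W:ℂ))⁻¹ • w) ∈ (Submodule.span ℂ (Set.range ⇑B)).topologicalClosure := by
        rw [B.dense_span]; trivial
      have h2 : (((W:ℂ))⁻¹ • w) ∈
          (↑((Submodule.span ℂ (Set.range ⇑B)).topologicalClosure) : Set _) := h1
      rwa [Submodule.topologicalClosure_coe] at h2
    obtain ⟨y, hymem, hyd⟩ := Metric.mem_closure_iff.mp hdense ε₁ hε₁pos
    obtain ⟨c, hc⟩ := Finsupp.mem_span_range_iff_exists_finsupp.mp hymem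
    refine ⟨g, c, hg0, hg01, hgpos, ?_⟩
    have hccoe : ⇑y =ᵐ[μ] fun x => ∑ η ∈ c.support, c η * (η x : ℂ) := by
      rw [← hc, Finsupp.sum]
      exact gohberg_aux_coeFn_csum c.support (fun η => c η) (fun η => B η)
        (fun η x => (η x : ℂ)) (fun η _ => hB η)
    have hwcoe : ⇑(((W:ℂ))⁻¹ • w) =ᵐ[μ] fun x => ((W:ℂ))⁻¹ * g x := by
      filter_upwards [Lp.coeFn_smul (((W:ℂ))⁻¹) w, hgmem.coeFn_toLp] with x h1 h2
      rw [h1]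
      simp [hwdef, h2, smul_eq_mul]
    have hnd : ‖y - ((W:ℂ))⁻¹ • w‖ < ε₁ := by rwa [dist_comm, dist_eq_norm] at hyd
    have heq : (eLpNorm (fun x => (∑ η ∈ c.support, c η * (η x : ℂ)) -
        (((W : ℝ) : ℂ))⁻¹ * g x) 2 μ).toReal = ‖y - ((W:ℂ))⁻¹ • w‖ := by
      rw [Lp.norm_def]
      congr 1
      refine eLpNorm_congr_ae ?_
      filter_upwards [Lp.coeFn_sub y (((W:ℂ))⁻¹ • w), hccoe, hwcoe] with x h1 h2 h3
      rw [h1, Pi.sub_apply, h2, h3]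
    rw [heq]
    exact hnd
  choose g c hg0 hg01 hgpos happrox using hdata
  -- the error sums
  set OscSum : X → PontryaginDual X → ℝ :=
    fun i ζ => ∑ η ∈ (c i).support, ‖c i η‖ * osc η ζ with hOscSumdef
  set PsiSum : X → PontryaginDual X → ℝ := fun i ζ => ∑ η ∈ (c i).support,
    ∑ k : Fin n, (‖c i η‖ * ‖aa k‖ * ‖φs k‖) * ‖ψs k (η * ζ)‖ with hPsiSumdef
  -- eventually along `F`, all the error sums are small
  have hgood : ∀ᶠ ζ in F, ∀ i ∈ t, OscSum i ζ < ε₁ ∧ PsiSum i ζ < ε₁ := by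
    rw [Filter.eventually_all_finset]
    intro i _
    set S1 := ∑ η ∈ (c i).support, ‖c i η‖ with hS1
    have hS1nn : 0 ≤ S1 := Finset.sum_nonneg fun _ _ => norm_nonneg _
    have hosc_ev : ∀ᶠ ζ in F, ∀ η ∈ (c i).support, osc η ζ < ε₁ / (S1 + 1) := by
      rw [Filter.eventually_all_finset]
      intro η _
      exact gohberg_aux_eventually_lt (fun ζ => hoscle η ζ) (hosc0 η) (by positivity)
    set S2 := ∑ η ∈ (c i).support, ∑ k : Fin n, ‖c i η‖ * ‖aa k‖ * ‖φs k‖ with hS2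
    have hS2nn : 0 ≤ S2 := by positivity
    have hψ_ev : ∀ᶠ ζ in F, ∀ η ∈ (c i).support, ∀ k : Fin n,
        ‖ψs k (η * ζ)‖ < ε₁ / (S2 + 1) := by
      rw [Filter.eventually_all_finset]
      intro η _
      rw [Filter.eventually_all]
      intro k
      have h1 : ∀ᶠ ξ in F, ‖ψs k ξ‖ < ε₁ / (S2 + 1) := by
        have h2 := gohberg_aux_eventually_lt (ψ := fun ξ => ‖ψs k ξ‖)
          (fun ξ => hCψ k ξ) (hψ0 k) (show (0:ℝ) < ε₁/(S2+1) by positivity)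
        simpa using h2
      exact (gohberg_aux_tendsto_mul Ω η (hΩinv η)).eventually h1
    filter_upwards [hosc_ev, hψ_ev] with ζ h1 h2
    have hfrac1 : S1 / (S1 + 1) < 1 := (div_lt_one (by positivity)).2 (by linarith)
    have hfrac2 : S2 / (S2 + 1) < 1 := (div_lt_one (by positivity)).2 (by linarith)
    constructor
    · calc OscSum i ζ ≤ ∑ η ∈ (c i).support, ‖c i η‖ * (ε₁ / (S1 + 1)) :=
            Finset.sum_le_sum fun η hη =>
              mul_le_mul_of_nonneg_left (h1 η hη).le (norm_nonneg _)
        _ = (S1 / (S1 + 1)) * ε₁ := by rw [← Finset.sum_mul]; ring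
        _ < 1 * ε₁ := mul_lt_mul_of_pos_right hfrac1 hε₁pos
        _ = ε₁ := one_mul _
    · calc PsiSum i ζ ≤ ∑ η ∈ (c i).support, ∑ k : Fin n,
            (‖c i η‖ * ‖aa k‖ * ‖φs k‖) * (ε₁ / (S2 + 1)) := by
            refine Finset.sum_le_sum fun η hη => Finset.sum_le_sum fun k _ =>
              mul_le_mul_of_nonneg_left (h2 η hη k).le (by positivity)
        _ = (S2 / (S2 + 1)) * ε₁ := by
            simp only [← Finset.sum_mul]
            ring
        _ < 1 * ε₁ := mul_lt_mul_of_pos_right hfrac2 hε₁pos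
        _ = ε₁ := one_mul _
  -- choose a good frequency `ζ`
  have hcobdd : F.IsCoboundedUnder (· ≤ ·) s :=
    Filter.IsBoundedUnder.isCoboundedUnder_le
      (Filter.isBoundedUnder_of ⟨0, fun ξ => hs0 ξ⟩)
  have hfreq : ∃ᶠ ζ in F, Filter.limsup s F - ε₁ < s ζ :=
    Filter.frequently_lt_of_lt_limsup hcobdd (sub_lt_self _ hε₁pos)
  obtain ⟨ζ, hζs, hζgood⟩ := (hfreq.and_eventually hgood).exists
  by_cases hcase : s ζ ≤ 3 * ε₁
  · have h4 : (4:ℝ) * ε₁ ≤ ε := by nlinarith [norm_nonneg (T - L), hε₁key, hC1, hε₁pos]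
    linarith [norm_nonneg (T - L)]
  push_neg at hcase
  set a := s ζ - 3 * ε₁ with hadef
  have ha : 0 < a := by rw [hadef]; linarith
  -- a point nearly attaining the sup
  have hxlt : s ζ - ε₁ < s ζ := sub_lt_self _ hε₁pos
  rw [hsdef] at hxlt
  simp only at hxlt
  obtain ⟨xst, hxst⟩ := exists_lt_of_lt_ciSup hxlt
  have hxstU : xst ∈ ⋃ x ∈ t, V x := htcov (Set.mem_univ xst)
  obtain ⟨i, hit, hxstV⟩ := Set.mem_iUnion₂.mp hxstU
  obtain ⟨hOscS, hPsiS⟩ := hζgood i hit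
  -- abbreviations
  set cc := c i with hccdef
  set U := V i with hUdef
  set nn := (eLpNorm (fun x => ((g i) x : ℂ)) 2 μ).toReal with hnndef
  have hnn : 0 < nn := hgpos i
  set φt : X → ℂ := fun x => ∑ η ∈ cc.support, cc η * (η x : ℂ) with hφtdef
  set gs : X → ℂ := fun x => ((nn : ℂ))⁻¹ * (g i) x with hgsdef
  have happx : (eLpNorm (fun x => φt x - gs x) 2 μ).toReal < ε₁ := happrox i
  -- continuity and bounds
  set S1 := ∑ η ∈ cc.support, ‖cc η‖ with hS1def
  have hS1nn : 0 ≤ S1 := Finset.sum_nonneg fun _ _ => norm_nonneg _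
  have hφtbd : ∀ x, ‖φt x‖ ≤ S1 := by
    intro x
    refine (norm_sum_le _ _).trans ?_
    refine Finset.sum_le_sum fun η _ => ?_
    rw [norm_mul, hchar1, mul_one]
  have hφtcont : Continuous φt := continuous_finset_sum _ fun η _ =>
    continuous_const.mul (hcharcont η)
  have hgscont : Continuous gs :=
    continuous_const.mul (Complex.continuous_ofReal.comp (g i).continuous)
  have hgsbd : ∀ x, ‖gs x‖ ≤ nn⁻¹ := by
    intro x
    rw [hgsdef]
    simp only
    rw [norm_mul, norm_inv, Complex.norm_real, Real.norm_eq_abs, abs_of_pos hnn,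
      Complex.norm_real, Real.norm_eq_abs]
    calc nn⁻¹ * |(g i) x| ≤ nn⁻¹ * 1 := by
          refine mul_le_mul_of_nonneg_left ?_ (by positivity)
          rw [abs_le]; exact ⟨by linarith [(hg01 i x).1], (hg01 i x).2⟩
      _ = nn⁻¹ := mul_one _
  -- lower bound of `|f · ζ|` on `U`
  have hUf : ∀ y, y ∈ U → a ≤ ‖f y ζ‖ := by
    intro y hy
    have n1 : ‖f y ζ - f i ζ‖ < ε₁ := by
      exact hVprop i y hy ζ
    have n2 : ‖f xst ζ - f i ζ‖ < ε₁ := by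
      exact hVprop i xst hxstV ζ
    have n3 : s ζ - ε₁ < ‖f xst ζ‖ := by exact hxst
    have t1 : ‖f xst ζ‖ - ‖f i ζ‖ ≤ ‖f xst ζ - f i ζ‖ := norm_sub_norm_le _ _
    have t2 : ‖f i ζ‖ - ‖f y ζ‖ ≤ ‖f i ζ - f y ζ‖ := norm_sub_norm_le _ _
    rw [norm_sub_rev] at t2
    rw [hadef]
    linarith
  -- the test element `u`
  set u : Lp ℂ 2 μ := ∑ η ∈ cc.support, cc η • B (η * ζ) with hudef
  have hucoe : ⇑u =ᵐ[μ] fun x => φt x * (ζ x : ℂ) := by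
    have h1 := gohberg_aux_coeFn_csum cc.support (fun η => cc η) (fun η => B (η * ζ))
      (fun η x => ((η * ζ) x : ℂ)) (fun η _ => hB (η * ζ))
    refine h1.trans (Eventually.of_forall fun x => ?_)
    show ∑ η ∈ cc.support, cc η * ((η * ζ) x : ℂ)
      = (∑ η ∈ cc.support, cc η * (η x : ℂ)) * (ζ x : ℂ)
    rw [Finset.sum_mul]
    exact Finset.sum_congr rfl fun η _ => by rw [hmul]; ring
  have hunorm : ‖u‖ = (eLpNorm φt 2 μ).toReal := by
    rw [Lp.norm_def, eLpNorm_congr_ae hucoe, gohberg_aux_unimodular (fun x => hchar1 ζ x)]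
  -- `‖u‖ ≤ 1 + ε₁`
  have hgs1 : (eLpNorm gs 2 μ).toReal = 1 := by
    have hrw : gs = ((nn:ℂ))⁻¹ • (fun x => (((g i) x : ℝ) : ℂ)) := rfl
    rw [hrw, eLpNorm_const_smul, ENNReal.toReal_mul]
    have h1 : (‖((nn:ℂ))⁻¹‖ₑ).toReal = nn⁻¹ := by
      simp [norm_inv, Complex.norm_real, Real.norm_eq_abs, abs_of_pos hnn]
    rw [h1, ← hnndef, inv_mul_cancel₀ hnn.ne']
  have hgsfin : eLpNorm gs 2 μ ≠ ∞ := gohberg_aux_ne_top hgsbd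
  have hsubbd : ∀ x, ‖φt x - gs x‖ ≤ S1 + nn⁻¹ := fun x =>
    (norm_sub_le _ _).trans (add_le_add (hφtbd x) (hgsbd x))
  have huub : ‖u‖ ≤ 1 + ε₁ := by
    have h2 := gohberg_aux_tri (μ := μ) (h := gs) (g := fun x => φt x - gs x) hgscont.aestronglyMeasurable
      (hφtcont.sub hgscont).aestronglyMeasurable hgsfin (gohberg_aux_ne_top hsubbd)
    simp only [add_sub_cancel] at h2
    rw [hunorm]
    calc (eLpNorm φt 2 μ).toReal
        ≤ (eLpNorm gs 2 μ).toReal + (eLpNorm (fun x => φt x - gs x) 2 μ).toReal := h2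
      _ ≤ 1 + ε₁ := by rw [hgs1]; linarith
  -- `T u` and its symbol
  have hTu : T u = ∑ η ∈ cc.support, cc η • T (B (η * ζ)) := by
    rw [hudef, map_sum]; simp_rw [_root_.map_smul]
  set G : X → ℂ := fun x => ∑ η ∈ cc.support, cc η * (f x (η * ζ) * ((η * ζ) x : ℂ))
    with hGdef
  have hGcoe : ⇑(T u) =ᵐ[μ] G := by
    rw [hTu]
    exact gohberg_aux_coeFn_csum _ _ _ _ (fun η _ => hT (η * ζ))
  have hTun : ‖T u‖ = (eLpNorm G 2 μ).toReal := by rw [Lp.norm_def, eLpNorm_congr_ae hGcoe]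
  set vfun : X → ℂ := fun x => f x ζ * (ζ x : ℂ) * φt x with hvdef
  have hGcont : Continuous G := continuous_finset_sum _ fun η _ =>
    continuous_const.mul ((hfcont (η * ζ)).mul (hcharcont (η * ζ)))
  have hvcont : Continuous vfun := ((hfcont ζ).mul (hcharcont ζ)).mul hφtcont
  have hGbd : ∀ x, ‖G x‖ ≤ S1 * C := by
    intro x
    refine (norm_sum_le _ _).trans ?_
    rw [hS1def, Finset.sum_mul]
    refine Finset.sum_le_sum fun η _ => ?_
    rw [norm_mul, norm_mul, hchar1, mul_one]
    exact mul_le_mul_of_nonneg_left (hfC x (η * ζ)) (norm_nonneg _)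
  have hvbd : ∀ x, ‖vfun x‖ ≤ C * S1 := by
    intro x
    simp only [hvdef]
    rw [norm_mul, norm_mul, hchar1, mul_one]
    exact mul_le_mul (hfC x ζ) (hφtbd x) (norm_nonneg _) (le_trans zero_le_one hC1)
  have hv2 : ∀ x, vfun x = ∑ η ∈ cc.support, cc η * (f x ζ * ((η * ζ) x : ℂ)) := by
    intro x
    simp only [hvdef, hφtdef]
    rw [Finset.mul_sum]
    exact Finset.sum_congr rfl fun η _ => by rw [hmul]; ring
  have hdiffb : ∀ x, ‖vfun x - G x‖ ≤ OscSum i ζ := by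
    intro x
    have hrw : vfun x - G x
        = ∑ η ∈ cc.support, cc η * ((f x ζ - f x (η * ζ)) * ((η * ζ) x : ℂ)) := by
      rw [hv2 x]
      simp only [hGdef]
      rw [← Finset.sum_sub_distrib]
      exact Finset.sum_congr rfl fun η _ => by ring
    rw [hrw]
    refine (norm_sum_le _ _).trans ?_
    simp only [hOscSumdef]
    refine Finset.sum_le_sum fun η hη => ?_
    rw [norm_mul, norm_mul, hchar1, mul_one]
    refine mul_le_mul_of_nonneg_left ?_ (norm_nonneg _)
    rw [norm_sub_rev, mul_comm η ζ]
    exact habs_le_osc η ζ x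
  have hNvle : (eLpNorm vfun 2 μ).toReal ≤ ‖T u‖ + ε₁ := by
    have h3 := gohberg_aux_tri (μ := μ) (h := G) (g := fun x => vfun x - G x)
      hGcont.aestronglyMeasurable (hvcont.sub hGcont).aestronglyMeasurable
      (gohberg_aux_ne_top hGbd)
      (gohberg_aux_ne_top (b := OscSum i ζ) hdiffb)
    simp only [add_sub_cancel] at h3
    have h4 : (eLpNorm (fun x => vfun x - G x) 2 μ).toReal ≤ OscSum i ζ :=
      gohberg_aux_toReal_le hdiffb
    rw [hTun]
    have h5 : (eLpNorm vfun 2 μ).toReal ≤ (eLpNorm G 2 μ).toReal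
        + (eLpNorm (fun x => vfun x - G x) 2 μ).toReal := by
      refine le_trans (le_of_eq ?_) h3
      congr 1
    linarith
  -- the lower bound via the indicator of `U`
  have hUmeas : MeasurableSet U := (hVopen i).measurableSet
  set indφ : X → ℂ := U.indicator φt with hinddef
  have hindAE : AEStronglyMeasurable indφ μ := hφtcont.aestronglyMeasurable.indicator hUmeas
  have hindbd : ∀ x, ‖indφ x‖ ≤ S1 := by
    intro x
    by_cases hx : x ∈ U
    · rw [hinddef, Set.indicator_of_mem hx]; exact hφtbd x
    · rw [hinddef, Set.indicator_of_notMem hx]; simpa using hS1nn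
  have hgseq : U.indicator gs = gs := by
    funext x
    by_cases hx : x ∈ U
    · rw [Set.indicator_of_mem hx]
    · rw [Set.indicator_of_notMem hx]
      symm
      simp only [hgsdef]
      rw [hg0 i x hx]
      simp
  have hindlow : 1 - ε₁ ≤ (eLpNorm indφ 2 μ).toReal := by
    have hbd2 : ∀ x, ‖U.indicator (fun y => gs y - φt y) x‖ ≤ nn⁻¹ + S1 := by
      intro x
      by_cases hx : x ∈ U
      · rw [Set.indicator_of_mem hx]
        exact (norm_sub_le _ _).trans (add_le_add (hgsbd x) (hφtbd x))
      · rw [Set.indicator_of_notMem hx]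
        simp
        positivity
    have h3 := gohberg_aux_tri (μ := μ) (h := indφ)
      (g := U.indicator fun y => gs y - φt y) hindAE
      ((hgscont.sub hφtcont).aestronglyMeasurable.indicator hUmeas)
      (gohberg_aux_ne_top hindbd) (gohberg_aux_ne_top hbd2)
    have hsplit : U.indicator gs = fun x => indφ x + U.indicator (fun y => gs y - φt y) x := by
      funext x
      by_cases hx : x ∈ U
      · simp [hinddef, Set.indicator_of_mem hx]
      · simp [hinddef, Set.indicator_of_notMem hx]
    have h4 : (eLpNorm (U.indicator gs) 2 μ).toReal ≤ (eLpNorm indφ 2 μ).toReal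
        + (eLpNorm (U.indicator fun y => gs y - φt y) 2 μ).toReal := by
      rw [hsplit]; exact h3
    rw [hgseq, hgs1] at h4
    have h5 : (eLpNorm (U.indicator fun y => gs y - φt y) 2 μ).toReal
        ≤ (eLpNorm (fun x => φt x - gs x) 2 μ).toReal := by
      refine gohberg_aux_mono (fun x => ?_) (gohberg_aux_ne_top hsubbd)
      by_cases hx : x ∈ U
      · rw [Set.indicator_of_mem hx, norm_sub_rev]
      · rw [Set.indicator_of_notMem hx]; simp
    linarith [happx]
  have hindalow : a * (1 - ε₁) ≤ (eLpNorm vfun 2 μ).toReal := by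
    have hsm : U.indicator (fun x => ((a:ℝ):ℂ) * φt x) = ((a:ℝ):ℂ) • indφ := by
      funext x
      by_cases hx : x ∈ U
      · simp [hinddef, Set.indicator_of_mem hx, smul_eq_mul]
      · simp [hinddef, Set.indicator_of_notMem hx]
    have heq2 : (eLpNorm (U.indicator fun x => ((a:ℝ):ℂ) * φt x) 2 μ).toReal
        = a * (eLpNorm indφ 2 μ).toReal := by
      rw [hsm, eLpNorm_const_smul, ENNReal.toReal_mul]
      congr 1
      simp [Complex.norm_real, Real.norm_eq_abs, abs_of_pos ha]
    have hle2 : (eLpNorm (U.indicator fun x => ((a:ℝ):ℂ) * φt x) 2 μ).toReal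
        ≤ (eLpNorm vfun 2 μ).toReal := by
      refine gohberg_aux_mono (fun x => ?_) (gohberg_aux_ne_top hvbd)
      by_cases hx : x ∈ U
      · rw [Set.indicator_of_mem hx]
        rw [norm_mul, Complex.norm_real, Real.norm_eq_abs, abs_of_pos ha]
        have hveq : ‖vfun x‖ = ‖f x ζ‖ * ‖φt x‖ := by
          simp only [hvdef]
          rw [norm_mul, norm_mul, hchar1, mul_one]
        rw [hveq]
        refine mul_le_mul_of_nonneg_right ?_ (norm_nonneg _)
        exact hUf x hx
      · rw [Set.indicator_of_notMem hx]; simp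
    calc a * (1 - ε₁) ≤ a * (eLpNorm indφ 2 μ).toReal :=
          mul_le_mul_of_nonneg_left hindlow ha.le
      _ = (eLpNorm (U.indicator fun x => ((a:ℝ):ℂ) * φt x) 2 μ).toReal := heq2.symm
      _ ≤ _ := hle2
  -- `L' u` is small
  have hopsum : ∀ v : Lp ℂ 2 μ, L' v = ∑ k : Fin n, aa k • ((↑(ops k) : Lp ℂ 2 μ →L[ℂ] Lp ℂ 2 μ) v) := by
    intro v
    rw [← hops]
    simp [ContinuousLinearMap.sum_apply, ContinuousLinearMap.smul_apply]
  have hL'ucoe : ⇑(L' u) =ᵐ[μ] fun x => ∑ η ∈ cc.support, cc η *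
      (∑ k : Fin n, aa k * (ψs k (η * ζ) * φs k x * ((η * ζ) x : ℂ))) := by
    have h1 : L' u = ∑ η ∈ cc.support, cc η • (L' (B (η * ζ))) := by
      rw [hudef, map_sum]; simp_rw [_root_.map_smul]
    rw [h1]
    refine gohberg_aux_coeFn_csum _ _ _ _ fun η _ => ?_
    rw [hopsum (B (η * ζ))]
    exact gohberg_aux_coeFn_csum Finset.univ (fun k => aa k)
      (fun k => (↑(ops k) : Lp ℂ 2 μ →L[ℂ] Lp ℂ 2 μ) (B (η * ζ)))
      (fun k x => ψs k (η * ζ) * φs k x * ((η * ζ) x : ℂ)) fun k _ => hψact k (η * ζ)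
  have hL'un : ‖L' u‖ ≤ PsiSum i ζ := by
    rw [Lp.norm_def, eLpNorm_congr_ae hL'ucoe]
    simp only [hPsiSumdef]
    refine gohberg_aux_toReal_le fun x => ?_
    refine (norm_sum_le _ _).trans (Finset.sum_le_sum fun η hη => ?_)
    rw [norm_mul]
    refine (mul_le_mul_of_nonneg_left (norm_sum_le _ _) (norm_nonneg _)).trans ?_
    rw [Finset.mul_sum]
    refine Finset.sum_le_sum fun k _ => ?_
    rw [norm_mul, norm_mul, norm_mul, hchar1, mul_one]
    have hφk := (φs k).norm_coe_le_norm x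
    calc ‖cc η‖ * (‖aa k‖ * (‖ψs k (η * ζ)‖ * ‖φs k x‖))
        = (‖cc η‖ * ‖aa k‖ * ‖ψs k (η * ζ)‖) * ‖φs k x‖ := by ring
      _ ≤ (‖cc η‖ * ‖aa k‖ * ‖ψs k (η * ζ)‖) * ‖φs k‖ :=
          mul_le_mul_of_nonneg_left hφk (by positivity)
      _ = ‖cc η‖ * ‖aa k‖ * ‖φs k‖ * ‖ψs k (η * ζ)‖ := by ring
  -- assembling the estimates
  have h6 : T u - L' u = (T - L') u := (ContinuousLinearMap.sub_apply T L' u).symm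
  have h7 : ‖(T - L') u‖ ≤ ‖T - L'‖ * ‖u‖ := (T - L').le_opNorm u
  have h8 : ‖T - L'‖ ≤ ‖T - L‖ + ε₁ := by
    have hTL : T - L' = (T - L) + (L - L') := by abel
    rw [hTL]
    exact (norm_add_le _ _).trans (by linarith)
  have h9 : ‖T u‖ ≤ ‖T u - L' u‖ + ‖L' u‖ := by
    have h := norm_add_le (T u - L' u) (L' u)
    simpa using h
  rw [h6] at h9
  have h10 : ‖T - L'‖ * ‖u‖ ≤ (‖T - L‖ + ε₁) * (1 + ε₁) :=
    mul_le_mul h8 huub (norm_nonneg _) (by positivity)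
  have key : a * (1 - ε₁) ≤ (‖T - L‖ + ε₁) * (1 + ε₁) + 2 * ε₁ := by
    linarith [hindalow, hNvle, hL'un, hPsiS, h9, h7, h10]
  have haC : a ≤ C := by rw [hadef]; linarith [hsle ζ, hε₁pos]
  have hr : Filter.limsup s F < a + 4 * ε₁ := by rw [hadef]; linarith
  nlinarith [key, hr, hε₁key, hε₁half, hε₁pos.le, norm_nonneg (T - L), hC1,
    mul_le_mul_of_nonneg_right haC hε₁pos.le,
    mul_le_mul_of_nonneg_right hε₁half hε₁pos.le]
end

section
/- The closed linear span in B(L²(X)) of the set of operators φ(Q) ∘ ψ(P), where φ ranges over C(X) and ψ ranges over c₀(Ξ), equals the ideal of compact operators on L²(X). -/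
open MeasureTheory Filter Topology Finset

noncomputable section AuxOperators

variable {ι H : Type*} [NormedAddCommGroup H] [InnerProductSpace ℂ H]

local notation "⟪" x ", " y "⟫" => @inner ℂ _ _ x y

/-- The rank-one operator `u ↦ ⟪v, u⟫ • w`. -/
noncomputable def rkOne (v w : H) : H →L[ℂ] H := (innerSL ℂ v).smulRight w

lemma rkOne_apply (v w u : H) : rkOne v w u = ⟪v, u⟫ • w := rfl

lemma isCompactOperator_rkOne (v w : H) : IsCompactOperator (rkOne v w) := by
  refine ⟨(fun c : ℂ => c • w) '' Metric.closedBall 0 ‖v‖,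
    (isCompact_closedBall 0 ‖v‖).image (by continuity), ?_⟩
  refine Filter.mem_of_superset (Metric.ball_mem_nhds 0 one_pos) ?_
  intro u hu
  refine ⟨⟪v, u⟫, ?_, rfl⟩
  simp only [Metric.mem_closedBall, dist_zero_right]
  calc ‖⟪v, u⟫‖ ≤ ‖v‖ * ‖u‖ := norm_inner_le_norm _ _
    _ ≤ ‖v‖ * 1 := by
        have : ‖u‖ < 1 := by simpa [dist_zero_right] using hu
        exact mul_le_mul_of_nonneg_left this.le (norm_nonneg v)
    _ = ‖v‖ := mul_one _

lemma isCompactOperator_finsetSum {κ : Type*} (s : Finset κ) (f : κ → H →L[ℂ] H)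
    (h : ∀ i ∈ s, IsCompactOperator (f i)) : IsCompactOperator (⇑(∑ i ∈ s, f i)) := by
  classical
  induction s using Finset.induction_on with
  | empty => simpa using (isCompactOperator_zero (M₁ := H) (M₂ := H))
  | insert a s' hnot ih =>
    rw [Finset.sum_insert hnot]
    have h1 : IsCompactOperator (⇑(f a) + ⇑(∑ i ∈ s', f i)) :=
      (h a (Finset.mem_insert_self _ _)).add (ih fun i hi => h i (Finset.mem_insert_of_mem hi))
    have : ⇑(f a + ∑ i ∈ s', f i) = ⇑(f a) + ⇑(∑ i ∈ s', f i) := by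
      ext u; simp
    rw [this]
    exact h1

/-- Partial-sum projections associated with a Hilbert basis. -/
noncomputable def Pj (b : HilbertBasis ι ℂ H) (F : Finset ι) : H →L[ℂ] H :=
  ∑ i ∈ F, rkOne (b i) (b i)

lemma Pj_apply (b : HilbertBasis ι ℂ H) (F : Finset ι) (u : H) :
    Pj b F u = ∑ i ∈ F, ⟪b i, u⟫ • b i := by
  simp [Pj, rkOne_apply]

lemma isCompactOperator_Pj (b : HilbertBasis ι ℂ H) (F : Finset ι) :
    IsCompactOperator (⇑(Pj b F)) :=
  isCompactOperator_finsetSum F _ fun i _ => isCompactOperator_rkOne (b i) (b i)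

lemma norm_sum_sq_orthonormal {v : ι → H} (hv : Orthonormal ℂ v) (c : ι → ℂ) (s : Finset ι) :
    ‖∑ i ∈ s, c i • v i‖ ^ 2 = ∑ i ∈ s, ‖c i‖ ^ 2 := by
  rw [@norm_sq_eq_re_inner ℂ, hv.inner_sum, map_sum]
  refine Finset.sum_congr rfl fun i _ => ?_
  rw [RCLike.conj_mul]
  norm_cast

lemma norm_Pj_apply_le (b : HilbertBasis ι ℂ H) (F : Finset ι) (u : H) :
    ‖Pj b F u‖ ≤ ‖u‖ := by
  refine le_of_pow_le_pow_left₀ two_ne_zero (norm_nonneg u) ?_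
  rw [Pj_apply, norm_sum_sq_orthonormal b.orthonormal]
  exact b.orthonormal.sum_inner_products_le u

lemma tendsto_Pj_apply (b : HilbertBasis ι ℂ H) (u : H) :
    Tendsto (fun F : Finset ι => Pj b F u) atTop (𝓝 u) := by
  have h := b.hasSum_repr u
  simp only [HasSum, b.repr_apply_apply] at h
  simp only [Pj_apply]
  exact h

lemma tendsto_rkOne (b : HilbertBasis ι ℂ H) (v w : H) :
    Tendsto (fun F : Finset ι => ∑ i ∈ F, ⟪v, b i⟫ • rkOne (b i) w) atTop (𝓝 (rkOne v w)) := by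
  rw [tendsto_iff_norm_sub_tendsto_zero]
  have hb : Tendsto (fun F : Finset ι => ‖v - Pj b F v‖ * ‖w‖) atTop (𝓝 0) := by
    have := ((tendsto_Pj_apply b v).const_sub v).norm
    simpa using this.mul_const ‖w‖
  refine squeeze_zero (fun F => norm_nonneg _) (fun F => ?_) hb
  refine ContinuousLinearMap.opNorm_le_bound _ (by positivity) fun u => ?_
  have key : (∑ i ∈ F, ⟪v, b i⟫ • rkOne (b i) w - rkOne v w) u = ⟪Pj b F v - v, u⟫ • w := by
    simp only [ContinuousLinearMap.sub_apply, ContinuousLinearMap.sum_apply,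
      ContinuousLinearMap.smul_apply, rkOne_apply, inner_sub_left, Pj_apply, sum_inner,
      inner_smul_left, inner_conj_symm]
    rw [sub_smul, Finset.sum_smul]
    congr 1
    exact Finset.sum_congr rfl fun i _ => by rw [smul_smul]
  rw [key, norm_smul]
  calc ‖⟪Pj b F v - v, u⟫‖ * ‖w‖ ≤ (‖Pj b F v - v‖ * ‖u‖) * ‖w‖ :=
        mul_le_mul_of_nonneg_right (norm_inner_le_norm _ _) (norm_nonneg w)
    _ = ‖v - Pj b F v‖ * ‖w‖ * ‖u‖ := by rw [norm_sub_rev]; ring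

lemma tendsto_Pj_comp [CompleteSpace H] (b : HilbertBasis ι ℂ H) {T : H →L[ℂ] H}
    (hT : IsCompactOperator T) :
    Tendsto (fun F : Finset ι => (Pj b F).comp T) atTop (𝓝 T) := by
  classical
  have hK : IsCompact (closure ((T : H →ₗ[ℂ] H) '' Metric.closedBall 0 1)) :=
    IsCompactOperator.isCompact_closure_image_closedBall (σ₁₂ := RingHom.id ℂ)
      (f := (T : H →ₗ[ℂ] H)) hT 1
  rw [Metric.tendsto_atTop]
  intro ε hε
  obtain ⟨t, _, htfin, htcover⟩ :=
    finite_cover_balls_of_compact hK (show (0:ℝ) < ε/4 by linarith)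
  have hevy : ∀ᶠ F : Finset ι in atTop, ∀ y ∈ t, ‖Pj b F y - y‖ < ε / 4 := by
    rw [eventually_all_finite htfin]
    intro y _
    have := Metric.tendsto_atTop.mp ((tendsto_Pj_apply b y))
    obtain ⟨N, hN⟩ := this (ε/4) (by linarith)
    exact eventually_atTop.mpr ⟨N, fun F hF => by
      simpa [dist_eq_norm] using hN F hF⟩
  obtain ⟨N, hN⟩ := eventually_atTop.mp hevy
  refine ⟨N, fun F hF => ?_⟩
  rw [dist_eq_norm]
  have hb : ∀ u : H, ‖((Pj b F).comp T - T) u‖ ≤ (3 * (ε/4)) * ‖u‖ := by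
    intro u
    rcases eq_or_ne u 0 with rfl | hu
    · simp
    · set c : ℝ := ‖u‖ with hc
      have hc0 : 0 < c := norm_pos_iff.mpr hu
      set z : H := c⁻¹ • u with hz
      have hzn : ‖z‖ = 1 := by
        rw [hz, norm_smul]
        simp [hc, abs_of_pos hc0, inv_mul_cancel₀ hc0.ne', hu]
      have hmem : T z ∈ closure ((T : H →ₗ[ℂ] H) '' Metric.closedBall 0 1) :=
        subset_closure ⟨z, by simp [hzn], rfl⟩
      obtain ⟨y, hyt, hy⟩ := Set.mem_iUnion₂.mp (htcover hmem)
      have h1 : ‖T z - y‖ < ε/4 := by rw [← dist_eq_norm]; exact hy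
      have h2 : ‖Pj b F y - y‖ < ε/4 := hN F hF y hyt
      have key : ‖Pj b F (T z) - T z‖ ≤ 3 * (ε/4) := by
        have hsplit : Pj b F (T z) - T z =
            Pj b F (T z - y) + (Pj b F y - y) + (y - T z) := by
          simp only [map_sub]; abel
        rw [hsplit]
        calc ‖Pj b F (T z - y) + (Pj b F y - y) + (y - T z)‖
            ≤ ‖Pj b F (T z - y)‖ + ‖Pj b F y - y‖ + ‖y - T z‖ := norm_add₃_le
          _ ≤ ‖T z - y‖ + ‖Pj b F y - y‖ + ‖y - T z‖ := by
              have := norm_Pj_apply_le b F (T z - y); gcongr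
          _ ≤ ε/4 + ε/4 + ε/4 := by
              have h1' : ‖y - T z‖ ≤ ε/4 := by rw [norm_sub_rev]; exact h1.le
              exact add_le_add (add_le_add h1.le h2.le) h1'
          _ = 3 * (ε/4) := by ring
      have hscale : ((Pj b F).comp T - T) u = c • (Pj b F (T z) - T z) := by
        simp only [ContinuousLinearMap.sub_apply, ContinuousLinearMap.comp_apply, hz]
        rw [T.map_smul_of_tower, (Pj b F).map_smul_of_tower, ← smul_sub, smul_smul,
          mul_inv_cancel₀ hc0.ne', one_smul]
      rw [hscale, norm_smul, Real.norm_eq_abs, abs_of_pos hc0]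
      calc c * ‖Pj b F (T z) - T z‖ ≤ c * (3*(ε/4)) := by gcongr
        _ = 3*(ε/4) * ‖u‖ := by rw [hc]; ring
  have := ContinuousLinearMap.opNorm_le_bound _ (by positivity) hb
  linarith

end AuxOperators

noncomputable section AuxLp

variable {α : Type*} [MeasurableSpace α] {μ : Measure α}

lemma Lp_coeFn_sum {κ : Type*} (s : Finset κ) (f : κ → Lp ℂ 2 μ) :
    ⇑(∑ i ∈ s, f i) =ᵐ[μ] fun x => ∑ i ∈ s, f i x := by
  classical
  induction s using Finset.induction_on with
  | empty => simp only [Finset.sum_empty]; exact Lp.coeFn_zero ℂ 2 μ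
  | insert a s' hnot ih =>
    calc ⇑(∑ i ∈ insert a s', f i) =ᵐ[μ] ⇑(f a) + ⇑(∑ i ∈ s', f i) := by
          rw [Finset.sum_insert hnot]; exact Lp.coeFn_add _ _
      _ =ᵐ[μ] fun x => ∑ i ∈ insert a s', f i x := by
          filter_upwards [ih] with x hx
          rw [Pi.add_apply, hx, Finset.sum_insert hnot]

lemma norm_le_of_ae_mul {φ : α → ℂ} {Cφ : ℝ} (hC : 0 ≤ Cφ) (hφ : ∀ x, ‖φ x‖ ≤ Cφ)
    (v w : Lp ℂ 2 μ) (h : ⇑w =ᵐ[μ] fun x => φ x * v x) : ‖w‖ ≤ Cφ * ‖v‖ := by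
  rw [Lp.norm_def, Lp.norm_def]
  have h1 : eLpNorm ⇑w 2 μ ≤ Real.toNNReal Cφ • eLpNorm ⇑v 2 μ := by
    rw [eLpNorm_congr_ae h]
    refine eLpNorm_le_nnreal_smul_eLpNorm_of_ae_le_mul ?_ 2
    refine Filter.Eventually.of_forall fun x => ?_
    have hle : ‖φ x * (v : α → ℂ) x‖ ≤ Cφ * ‖(v : α → ℂ) x‖ := by
      rw [norm_mul]; exact mul_le_mul_of_nonneg_right (hφ x) (norm_nonneg _)
    rw [← NNReal.coe_le_coe]
    push_cast
    simpa [Real.coe_toNNReal _ hC] using hle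
  calc (eLpNorm ⇑w 2 μ).toReal ≤ (Cφ.toNNReal • eLpNorm ⇑v 2 μ).toReal := by
        refine ENNReal.toReal_mono ?_ h1
        simp [ENNReal.smul_def, ENNReal.mul_ne_top, Lp.eLpNorm_ne_top]
    _ = Cφ * (eLpNorm ⇑v 2 μ).toReal := by
        rw [ENNReal.smul_def, smul_eq_mul, ENNReal.toReal_mul, ENNReal.coe_toReal,
          Real.coe_toNNReal _ hC]

end AuxLp

noncomputable section Generator

open scoped InnerProductSpace

variable {α : Type*} [TopologicalSpace α] [CompactSpace α] [MeasurableSpace α]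
  {μ : Measure α} {ι : Type*}

local notation "⟪" x ", " y "⟫" => @inner ℂ _ _ x y

/-- A generator `φ(Q)ψ(P)` with `ψ ∈ c₀` is a compact operator. -/
lemma generator_isCompact (B : HilbertBasis ι ℂ (Lp ℂ 2 μ)) (φ : C(α, ℂ))
    (ψ : ι → ℂ) (hψ : Tendsto ψ cofinite (𝓝 0)) (L : Lp ℂ 2 μ →L[ℂ] Lp ℂ 2 μ)
    (hL : ∀ i, ⇑(L (B i)) =ᵐ[μ] fun x => ψ i * φ x * ⇑(B i) x) :
    IsCompactOperator ⇑L := by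
  classical
  have key : ∀ ε > (0:ℝ), ∃ K : Lp ℂ 2 μ →L[ℂ] Lp ℂ 2 μ,
      IsCompactOperator ⇑K ∧ ‖L - K‖ ≤ ε := by
    intro ε hε
    have hφ1 : (0:ℝ) < ‖φ‖ + 1 := by positivity
    set δ : ℝ := ε / (‖φ‖ + 1) with hδdef
    have hδ : 0 < δ := div_pos hε hφ1
    have hfin : {i | ¬ ‖ψ i‖ < δ}.Finite := by
      have := hψ (Metric.ball_mem_nhds 0 hδ)
      simpa [Filter.mem_cofinite, Set.preimage, Metric.mem_ball, dist_zero_right,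
        Set.compl_setOf] using this
    set F : Finset ι := hfin.toFinset with hFdef
    have hFmem : ∀ i, i ∉ F → ‖ψ i‖ < δ := by
      intro i hi
      by_contra hcon
      exact hi (hfin.mem_toFinset.mpr hcon)
    refine ⟨L.comp (Pj B F), (isCompactOperator_Pj B F).continuous_comp L.continuous, ?_⟩
    have hεδ : (‖φ‖ + 1) * δ = ε := by
      rw [hδdef, mul_div_cancel₀ _ hφ1.ne']
    -- pointwise bound on the dense span of the basis
    have hsp : ∀ u ∈ (Submodule.span ℂ (Set.range ⇑B) : Set (Lp ℂ 2 μ)),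
        ‖(L - L.comp (Pj B F)) u‖ ≤ ε * ‖u‖ := by
      intro u hu
      rw [SetLike.mem_coe, Finsupp.mem_span_range_iff_exists_finsupp] at hu
      obtain ⟨c, rfl⟩ := hu
      rw [Finsupp.sum]
      set G := c.support with hG
      have hPB : ∀ i, Pj B F (B i) = if i ∈ F then B i else 0 := by
        intro i
        rw [Pj_apply]
        have hON := orthonormal_iff_ite.mp B.orthonormal
        simp only [hON, ite_smul, one_smul, zero_smul]
        exact Finset.sum_ite_eq' F i fun j => B j
      have hdiff : (L - L.comp (Pj B F)) (∑ i ∈ G, c i • B i)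
          = ∑ i ∈ G \ F, c i • L (B i) := by
        have e1 : (Pj B F) (∑ i ∈ G, c i • B i)
            = ∑ i ∈ G, if i ∈ F then c i • B i else 0 := by
          rw [map_sum]
          refine Finset.sum_congr rfl fun i _ => ?_
          rw [(Pj B F).map_smul, hPB i]
          by_cases hi : i ∈ F <;> simp [hi]
        have e2 : L (∑ i ∈ G, if i ∈ F then c i • B i else 0)
            = ∑ i ∈ G, if i ∈ F then c i • L (B i) else 0 := by
          rw [map_sum]
          refine Finset.sum_congr rfl fun i _ => ?_
          by_cases hi : i ∈ F <;> simp [hi]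
        rw [ContinuousLinearMap.sub_apply, ContinuousLinearMap.comp_apply, e1, e2, map_sum,
          ← Finset.sum_sub_distrib]
        have e3 : ∀ i ∈ G, L (c i • B i) - (if i ∈ F then c i • L (B i) else 0)
            = if i ∉ F then c i • L (B i) else 0 := by
          intro i _
          by_cases hi : i ∈ F <;> simp [hi]
        rw [Finset.sum_congr rfl e3, ← Finset.sum_filter, ← Finset.sdiff_eq_filter]
      rw [hdiff]
      set w : Lp ℂ 2 μ := ∑ i ∈ G \ F, c i • L (B i) with hw
      set v : Lp ℂ 2 μ := ∑ i ∈ G \ F, (c i * ψ i) • B i with hv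
      have hwv : ⇑w =ᵐ[μ] fun x => φ x * ⇑v x := by
        have h1 : ⇑w =ᵐ[μ] fun x => ∑ i ∈ G \ F, c i * (ψ i * φ x * ⇑(B i) x) := by
          refine (Lp_coeFn_sum _ _).trans ?_
          have : ∀ i ∈ G \ F, (fun x => (c i • L (B i)) x)
              =ᵐ[μ] fun x => c i * (ψ i * φ x * ⇑(B i) x) := by
            intro i _
            filter_upwards [Lp.coeFn_smul (c i) (L (B i)), hL i] with x hx1 hx2
            simp [hx1, hx2]
          have hsum := eventuallyEq_sum (s := G \ F) this
          filter_upwards [hsum] with x hx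
          simpa [Finset.sum_apply] using hx
        have h2 : ⇑v =ᵐ[μ] fun x => ∑ i ∈ G \ F, (c i * ψ i) * ⇑(B i) x := by
          refine (Lp_coeFn_sum _ _).trans ?_
          have : ∀ i ∈ G \ F, (fun x => ((c i * ψ i) • B i) x)
              =ᵐ[μ] fun x => (c i * ψ i) * ⇑(B i) x := by
            intro i _
            filter_upwards [Lp.coeFn_smul (c i * ψ i) (B i)] with x hx1
            simp [hx1]
          have hsum := eventuallyEq_sum (s := G \ F) this
          filter_upwards [hsum] with x hx
          simpa [Finset.sum_apply] using hx
        filter_upwards [h1, h2] with x hx1 hx2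
        rw [hx1, hx2, Finset.mul_sum]
        exact Finset.sum_congr rfl fun i _ => by ring
      have hnw : ‖w‖ ≤ ‖φ‖ * ‖v‖ :=
        norm_le_of_ae_mul (norm_nonneg φ) φ.norm_coe_le_norm v w hwv
      have hnv : ‖v‖ ≤ δ * ‖∑ i ∈ G, c i • B i‖ := by
        refine le_of_pow_le_pow_left₀ two_ne_zero (by positivity) ?_
        rw [hv, norm_sum_sq_orthonormal B.orthonormal]
        rw [mul_pow, norm_sum_sq_orthonormal B.orthonormal]
        calc ∑ i ∈ G \ F, ‖c i * ψ i‖ ^ 2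
            ≤ ∑ i ∈ G \ F, δ^2 * ‖c i‖ ^ 2 := by
              refine Finset.sum_le_sum fun i hi => ?_
              have hiF : i ∉ F := (Finset.mem_sdiff.mp hi).2
              have := hFmem i hiF
              rw [norm_mul, mul_pow]
              calc ‖c i‖^2 * ‖ψ i‖^2 ≤ ‖c i‖^2 * δ^2 := by
                    refine mul_le_mul_of_nonneg_left ?_ (by positivity)
                    exact pow_le_pow_left₀ (norm_nonneg _) this.le 2
                _ = δ^2 * ‖c i‖^2 := by ring
          _ = δ^2 * ∑ i ∈ G \ F, ‖c i‖^2 := by rw [Finset.mul_sum]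
          _ ≤ δ^2 * ∑ i ∈ G, ‖c i‖^2 := by
              refine mul_le_mul_of_nonneg_left ?_ (by positivity)
              exact Finset.sum_le_sum_of_subset_of_nonneg (Finset.sdiff_subset)
                fun i _ _ => by positivity
      calc ‖w‖ ≤ ‖φ‖ * ‖v‖ := hnw
        _ ≤ ‖φ‖ * (δ * ‖∑ i ∈ G, c i • B i‖) :=
            mul_le_mul_of_nonneg_left hnv (norm_nonneg φ)
        _ ≤ (‖φ‖ + 1) * (δ * ‖∑ i ∈ G, c i • B i‖) := by
            refine mul_le_mul_of_nonneg_right (by linarith) ?_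
            positivity
        _ = ε * ‖∑ i ∈ G, c i • B i‖ := by rw [← hεδ]; ring
    -- extend to all u by density
    have hclosed : IsClosed {u : Lp ℂ 2 μ | ‖(L - L.comp (Pj B F)) u‖ ≤ ε * ‖u‖} :=
      isClosed_le ((L - L.comp (Pj B F)).continuous.norm)
        (continuous_const.mul continuous_norm)
    have hdense : Dense (Submodule.span ℂ (Set.range ⇑B) : Set (Lp ℂ 2 μ)) := by
      rw [Submodule.dense_iff_topologicalClosure_eq_top]
      exact B.dense_span
    have hall : ∀ u, ‖(L - L.comp (Pj B F)) u‖ ≤ ε * ‖u‖ := by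
      intro u
      have hsub : (Submodule.span ℂ (Set.range ⇑B) : Set (Lp ℂ 2 μ))
          ⊆ {u | ‖(L - L.comp (Pj B F)) u‖ ≤ ε * ‖u‖} := hsp
      have : (Set.univ : Set (Lp ℂ 2 μ))
          ⊆ {u | ‖(L - L.comp (Pj B F)) u‖ ≤ ε * ‖u‖} := by
        rw [← hdense.closure_eq]
        exact hclosed.closure_subset_iff.mpr hsub
      exact this (Set.mem_univ u)
    exact ContinuousLinearMap.opNorm_le_bound _ hε.le hall
  have hmem : L ∈ closure {T : Lp ℂ 2 μ →L[ℂ] Lp ℂ 2 μ | IsCompactOperator ⇑T} := by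
    rw [Metric.mem_closure_iff]
    intro ε hε
    obtain ⟨K, hK, hKe⟩ := key (ε/2) (by linarith)
    refine ⟨K, hK, ?_⟩
    rw [dist_eq_norm]
    calc ‖L - K‖ ≤ ε/2 := hKe
      _ < ε := by linarith
  rwa [isClosed_setOf_isCompactOperator.closure_eq] at hmem

end Generator

/-- **The standard ideal** (`𝔻^{δΞ} = 𝕂(L²(X))`, Remark 4.2/`ayubid`).  `X` is a compact
Hausdorff abelian group with normalized Haar probability measure, `Ξ = PontryaginDual X`
its discrete dual, whose characters form a Hilbert basis `B` of `L²(X)`.  The closed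
linear span in `B(L²(X))` of the operators `φ(Q)ψ(P)` (characterized by their action
`φ(Q)ψ(P) ζ = ψ(ζ)·φ·ζ` on the characters) with `φ ∈ C(X)` and `ψ ∈ c₀(Ξ)` equals the
ideal of compact operators on `L²(X)`. -/
theorem closed_span_multiplication_convolution_eq_compact
    {X : Type} [CommGroup X] [TopologicalSpace X] [IsTopologicalGroup X]
    [CompactSpace X] [T2Space X] [MeasurableSpace X] [BorelSpace X]
    (μ : Measure X) [μ.IsHaarMeasure] [IsProbabilityMeasure μ]
    -- the characters form an orthonormal Hilbert basis of `L²(X)`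
    (B : HilbertBasis (PontryaginDual X) ℂ (Lp ℂ 2 μ))
    (hB : ∀ ζ : PontryaginDual X, ⇑(B ζ) =ᵐ[μ] fun x => (ζ x : ℂ)) :
    closure (↑(Submodule.span ℂ
        {L : Lp ℂ 2 μ →L[ℂ] Lp ℂ 2 μ | ∃ φ : C(X, ℂ), ∃ ψ : PontryaginDual X → ℂ,
          Filter.Tendsto ψ Filter.cofinite (𝓝 0) ∧
          ∀ ζ : PontryaginDual X,
            ⇑(L (B ζ)) =ᵐ[μ] fun x => ψ ζ * φ x * (ζ x : ℂ)}) : Set _)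
      = {L : Lp ℂ 2 μ →L[ℂ] Lp ℂ 2 μ | IsCompactOperator L} := by
  classical
  set S : Set (Lp ℂ 2 μ →L[ℂ] Lp ℂ 2 μ) :=
    {L | ∃ φ : C(X, ℂ), ∃ ψ : PontryaginDual X → ℂ,
      Filter.Tendsto ψ Filter.cofinite (𝓝 0) ∧
      ∀ ζ : PontryaginDual X,
        ⇑(L (B ζ)) =ᵐ[μ] fun x => ψ ζ * φ x * (ζ x : ℂ)} with hSdef
  apply subset_antisymm
  · -- forward inclusion: closed span ⊆ compacts
    have hsub : (Submodule.span ℂ S : Set (Lp ℂ 2 μ →L[ℂ] Lp ℂ 2 μ))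
        ⊆ {L | IsCompactOperator L} := by
      intro L hL
      have hle : Submodule.span ℂ S ≤
          compactOperator (RingHom.id ℂ) (Lp ℂ 2 μ) (Lp ℂ 2 μ) := by
        rw [Submodule.span_le]
        rintro L₀ ⟨φ, ψ, hψ, hL₀⟩
        have hL₀' : ∀ ζ, ⇑(L₀ (B ζ)) =ᵐ[μ] fun x => ψ ζ * φ x * ⇑(B ζ) x := by
          intro ζ
          filter_upwards [hL₀ ζ, hB ζ] with x hx1 hx2
          rw [hx1, hx2]
        exact generator_isCompact B φ ψ hψ L₀ hL₀'
      exact hle hL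
    calc closure (↑(Submodule.span ℂ S) : Set (Lp ℂ 2 μ →L[ℂ] Lp ℂ 2 μ))
        ⊆ closure {L : Lp ℂ 2 μ →L[ℂ] Lp ℂ 2 μ | IsCompactOperator L} := closure_mono hsub
      _ = {L : Lp ℂ 2 μ →L[ℂ] Lp ℂ 2 μ | IsCompactOperator L} :=
          isClosed_setOf_isCompactOperator.closure_eq
  · -- reverse inclusion: compacts ⊆ closed span
    intro T hT
    rw [← Submodule.topologicalClosure_coe]
    set M := (Submodule.span ℂ S).topologicalClosure with hM
    -- step 1: basic rank-one operators are in the span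
    have h1 : ∀ η ζ : PontryaginDual X, rkOne (B η) (B ζ) ∈ Submodule.span ℂ S := by
      intro η ζ
      refine Submodule.subset_span ?_
      refine ⟨⟨fun x => ((ζ * η⁻¹ : PontryaginDual X) x : ℂ), by continuity⟩,
        fun ξ => if ξ = η then 1 else 0, ?_, ?_⟩
      · refine Tendsto.congr' ?_ tendsto_const_nhds
        filter_upwards [(Set.finite_singleton η).eventually_cofinite_notMem] with ξ hξ
        simp only [Set.mem_singleton_iff] at hξ
        simp [hξ]
      · intro ξ
        have hON := orthonormal_iff_ite.mp B.orthonormal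
        by_cases hξ : ξ = η
        · subst hξ
          have : rkOne (B ξ) (B ζ) (B ξ) = B ζ := by
            rw [rkOne_apply, hON]
            simp
          rw [this]
          filter_upwards [hB ζ] with x hx
          rw [hx]
          have hne : ((ξ : PontryaginDual X) x : ℂ) ≠ 0 := Circle.coe_ne_zero _
          simp only [ContinuousMap.coe_mk]
          rw [show (((ζ * ξ⁻¹ : PontryaginDual X)) x : ℂ)
              = (ζ x : ℂ) * ((ξ x : ℂ))⁻¹ from rfl]
          simp [mul_assoc, inv_mul_cancel₀ hne]
        · have : rkOne (B η) (B ζ) (B ξ) = 0 := by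
            rw [rkOne_apply, hON]
            simp [Ne.symm hξ]
          rw [this]
          filter_upwards [Lp.coeFn_zero ℂ 2 μ] with x hx
          rw [hx]
          simp [hξ]
    -- step 2: rank-one operators with arbitrary bra are in the closure
    have h2 : ∀ (v : Lp ℂ 2 μ) (ζ : PontryaginDual X), rkOne v (B ζ) ∈ M := by
      intro v ζ
      have hmem : ∀ F : Finset (PontryaginDual X),
          (∑ i ∈ F, (inner ℂ v (B i) : ℂ) • rkOne (B i) (B ζ)) ∈ M := fun F =>
        Submodule.sum_mem _ fun i _ => Submodule.smul_mem _ _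
          (Submodule.le_topologicalClosure _ (h1 i ζ))
      exact (Submodule.isClosed_topologicalClosure _).mem_of_tendsto
        (tendsto_rkOne B v (B ζ)) (Filter.Eventually.of_forall hmem)
    -- step 3: P_F ∘ T ∈ M and T = lim P_F ∘ T
    have h3 : ∀ F : Finset (PontryaginDual X), (Pj B F).comp T ∈ M := by
      intro F
      have : (Pj B F).comp T =
          ∑ ζ ∈ F, rkOne (ContinuousLinearMap.adjoint T (B ζ)) (B ζ) := by
        refine ContinuousLinearMap.ext fun u => ?_
        rw [ContinuousLinearMap.comp_apply, Pj_apply, ContinuousLinearMap.sum_apply]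
        refine Finset.sum_congr rfl fun i _ => ?_
        rw [rkOne_apply]
        congr 1
        exact (ContinuousLinearMap.adjoint_inner_left T u (B i)).symm
      rw [this]
      exact Submodule.sum_mem _ fun ζ _ => h2 _ ζ
    exact (Submodule.isClosed_topologicalClosure _).mem_of_tendsto
      (tendsto_Pj_comp B hT) (Filter.Eventually.of_forall h3)
end

section
/- Let L ∈ 𝔻^Ω, u ∈ L²(X) and x₀ ∈ X. Then ‖L(E(x₀,ξ₀)u)‖_{L²(X)} tends to 0 along the filter 𝓕_Ω (in the variable ξ₀ ∈ Ξ). -/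
open MeasureTheory Filter Topology

set_option maxHeartbeats 1000000 in
/-- **Proposition 3.2 (`gokce`).**  With `X` a compact Hausdorff abelian group with Haar
probability measure, `Ξ = PontryaginDual X` (discrete), and `Ω` a nonempty closed
invariant subset of the corona of `βΞ`, let `𝔻^Ω` be the closed linear span of the
operators `φ(Q)ψ(P)` with `φ ∈ C(X)`, `ψ ∈ ℓ^{∞,Ω}(Ξ)`.  For `L ∈ 𝔻^Ω`, `u ∈ L²(X)`,
`x₀ ∈ X`, and the unitaries `E(x₀,ξ₀)u = (x ↦ ξ₀(x)u(xx₀⁻¹))`, the norms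
`‖L(E(x₀,ξ₀)u)‖` tend to `0` along the filter `𝓕_Ω` in the variable `ξ₀`. -/
theorem ideal_kills_twisted_translates
    {X : Type} [CommGroup X] [TopologicalSpace X] [IsTopologicalGroup X]
    [CompactSpace X] [T2Space X] [MeasurableSpace X] [BorelSpace X]
    (μ : Measure X) [μ.IsHaarMeasure] [IsProbabilityMeasure μ]
    [DiscreteTopology (PontryaginDual X)]
    -- the characters form an orthonormal Hilbert basis of `L²(X)`
    (B : HilbertBasis (PontryaginDual X) ℂ (Lp ℂ 2 μ))
    (hB : ∀ ζ : PontryaginDual X, ⇑(B ζ) =ᵐ[μ] fun x => (ζ x : ℂ))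
    -- `Ω` : a nonempty closed invariant subset of the corona `βΞ \ Ξ`
    (Ω : Set (StoneCech (PontryaginDual X)))
    (hΩne : Ω.Nonempty) (hΩcl : IsClosed Ω)
    (hΩcorona : Ω ⊆ (Set.range
      (stoneCechUnit : PontryaginDual X → StoneCech (PontryaginDual X)))ᶜ)
    (hΩinv : ∀ η : PontryaginDual X,
      stoneCechExtend (continuous_of_discreteTopology
        (f := fun ξ : PontryaginDual X => stoneCechUnit (η * ξ))) '' Ω ⊆ Ω)
    -- `L ∈ 𝔻^Ω`
    (L : Lp ℂ 2 μ →L[ℂ] Lp ℂ 2 μ)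
    (hL : L ∈ closure (↑(Submodule.span ℂ
        {L : Lp ℂ 2 μ →L[ℂ] Lp ℂ 2 μ | ∃ φ : C(X, ℂ), ∃ ψ : PontryaginDual X → ℂ,
          (∃ C, ∀ ξ, ‖ψ ξ‖ ≤ C) ∧
          Filter.limsup (fun ξ => ‖ψ ξ‖)
            (Filter.comap stoneCechUnit (𝓝ˢ Ω)) = 0 ∧
          ∀ ζ : PontryaginDual X,
            ⇑(L (B ζ)) =ᵐ[μ] fun x => ψ ζ * φ x * (ζ x : ℂ)}) : Set _))
    -- `E ξ₀ = E(x₀,ξ₀)u`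
    (u : Lp ℂ 2 μ) (x₀ : X) (E : PontryaginDual X → Lp ℂ 2 μ)
    (hE : ∀ ξ₀ : PontryaginDual X,
      ⇑(E ξ₀) =ᵐ[μ] fun x => (ξ₀ x : ℂ) * (u : X → ℂ) (x * x₀⁻¹)) :
    Filter.Tendsto (fun ξ₀ => ‖L (E ξ₀)‖)
      (Filter.comap stoneCechUnit (𝓝ˢ Ω)) (𝓝 0) := by
  classical
  set 𝓕 : Filter (PontryaginDual X) :=
    Filter.comap stoneCechUnit (𝓝ˢ Ω) with h𝓕
  set S : Set (Lp ℂ 2 μ →L[ℂ] Lp ℂ 2 μ) :=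
    {L : Lp ℂ 2 μ →L[ℂ] Lp ℂ 2 μ | ∃ φ : C(X, ℂ), ∃ ψ : PontryaginDual X → ℂ,
          (∃ C, ∀ ξ, ‖ψ ξ‖ ≤ C) ∧
          Filter.limsup (fun ξ => ‖ψ ξ‖) 𝓕 = 0 ∧
          ∀ ζ : PontryaginDual X,
            ⇑(L (B ζ)) =ᵐ[μ] fun x => ψ ζ * φ x * (ζ x : ℂ)} with hS
  -- measure preservation of right translation
  have hmp : MeasurePreserving (fun x : X => x * x₀⁻¹) μ μ :=
    measurePreserving_mul_right μ x₀⁻¹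
  -- norm helper : if `r` a.e. equals `x ↦ ξ₀ x * v (x x₀⁻¹)` then `‖r‖ = ‖v‖`
  have normAux : ∀ (ξ₀ : PontryaginDual X) (v r : Lp ℂ 2 μ),
      (⇑r =ᵐ[μ] fun x => (ξ₀ x : ℂ) * (v : X → ℂ) (x * x₀⁻¹)) → ‖r‖ = ‖v‖ := by
    intro ξ₀ v r hr
    rw [Lp.norm_def, Lp.norm_def, eLpNorm_congr_ae hr]
    congr 1
    have h1 : eLpNorm (fun x => (ξ₀ x : ℂ) * (v : X → ℂ) (x * x₀⁻¹)) 2 μ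
        = eLpNorm ((v : X → ℂ) ∘ fun x => x * x₀⁻¹) 2 μ := by
      apply eLpNorm_congr_norm_ae
      filter_upwards with x
      simp [Function.comp, Circle.norm_coe]
    rw [h1, eLpNorm_comp_measurePreserving (Lp.aestronglyMeasurable v) hmp]
  -- composing a.e. equalities with the right translation
  have hcomp_ae : ∀ f g : X → ℂ, f =ᵐ[μ] g →
      (fun x => f (x * x₀⁻¹)) =ᵐ[μ] fun x => g (x * x₀⁻¹) := by
    intro f g h
    exact ae_eq_comp (hmp.measurable.aemeasurable) (by rwa [hmp.map_eq])
  -- invariance of the filter under translations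
  have hshift : ∀ η : PontryaginDual X, Tendsto (fun ξ₀ => ξ₀ * η) 𝓕 𝓕 := by
    intro η
    rw [h𝓕, tendsto_comap_iff]
    have hg : Continuous (stoneCechExtend (continuous_of_discreteTopology
        (f := fun ξ : PontryaginDual X => stoneCechUnit (η * ξ)))) :=
      continuous_stoneCechExtend _
    have hmt : Set.MapsTo (stoneCechExtend (continuous_of_discreteTopology
        (f := fun ξ : PontryaginDual X => stoneCechUnit (η * ξ)))) Ω Ω :=
      fun z hz => hΩinv η ⟨z, hz, rfl⟩
    have h2 := (hg.tendsto_nhdsSet hmt).comp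
      (tendsto_comap : Tendsto stoneCechUnit 𝓕 (𝓝ˢ Ω))
    refine h2.congr fun ξ₀ => ?_
    show stoneCechExtend _ (stoneCechUnit ξ₀) = stoneCechUnit (ξ₀ * η)
    rw [← Function.comp_apply (f := stoneCechExtend _) (g := stoneCechUnit),
      stoneCechExtend_extends, mul_comm]
  -- vanishing of the symbols along the filter
  have habs0 : ∀ ψ : PontryaginDual X → ℂ, (∃ C, ∀ ξ, ‖ψ ξ‖ ≤ C) →
      Filter.limsup (fun ξ => ‖ψ ξ‖) 𝓕 = 0 →
      Tendsto (fun ξ => ‖ψ ξ‖) 𝓕 (𝓝 0) := by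
    rintro ψ ⟨C, hC⟩ hlim
    rw [Metric.tendsto_nhds]
    intro ε hε
    have hbdd : IsBoundedUnder (· ≤ ·) 𝓕 fun ξ => ‖ψ ξ‖ :=
      isBoundedUnder_of ⟨C, fun ξ => hC ξ⟩
    filter_upwards [eventually_lt_of_limsup_lt (by rw [hlim]; exact hε) hbdd] with ξ hξ
    rw [Real.dist_eq, sub_zero, abs_of_nonneg (norm_nonneg _)]
    exact hξ
  -- coercion of finite sums of basis vectors
  have hsum_coe : ∀ (F : Finset (PontryaginDual X)) (c : PontryaginDual X → ℂ)
      (g : PontryaginDual X → PontryaginDual X),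
      ⇑(∑ η ∈ F, c η • B (g η)) =ᵐ[μ] fun x => ∑ η ∈ F, c η * ((g η) x : ℂ) := by
    intro F c g
    induction F using Finset.induction_on with
    | empty => simp only [Finset.sum_empty]; exact Lp.coeFn_zero ℂ 2 μ
    | insert η F' hη ih =>
      rw [Finset.sum_insert hη]
      filter_upwards [Lp.coeFn_add (c η • B (g η)) (∑ η ∈ F', c η • B (g η)),
        Lp.coeFn_smul (c η) (B (g η)), hB (g η), ih] with x h1 h2 h3 h4
      rw [h1]
      simp only [Pi.add_apply, Finset.sum_insert hη, h2, Pi.smul_apply, h3, h4,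
        smul_eq_mul]
  -- Step 1 : generators satisfy the conclusion
  have hgen : ∀ L₀ ∈ S, Tendsto (fun ξ₀ => ‖L₀ (E ξ₀)‖) 𝓕 (𝓝 0) := by
    rintro L₀ ⟨φ, ψ, hψbd, hψlim, hrep⟩
    have hψ0 := habs0 ψ hψbd hψlim
    have hψη : ∀ η : PontryaginDual X,
        Tendsto (fun ξ₀ => ‖ψ (η * ξ₀)‖) 𝓕 (𝓝 0) := by
      intro η
      refine (hψ0.comp (hshift η)).congr fun ξ₀ => ?_
      simp [Function.comp, mul_comm]
    have hLB : ∀ ζ, ‖L₀ (B ζ)‖ ≤ ‖ψ ζ‖ * ‖φ‖ := by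
      intro ζ
      have hb : ∀ᵐ x ∂μ, ‖(L₀ (B ζ) : X → ℂ) x‖ ≤ ‖ψ ζ‖ * ‖φ‖ := by
        filter_upwards [hrep ζ] with x hx
        rw [hx, norm_mul, norm_mul]
        simp only [Circle.norm_coe, mul_one]
        gcongr
        calc ‖φ x‖ = ‖φ x‖ := rfl
          _ ≤ ‖φ‖ := φ.norm_coe_le_norm x
      have hnorm := Lp.norm_le_of_ae_bound (by positivity) hb
      simpa [measureUnivNNReal, measure_univ, Real.one_rpow] using hnorm
    rw [Metric.tendsto_nhds]
    intro ε hε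
    set M := ‖L₀‖ with hM
    have hM0 : 0 ≤ M := norm_nonneg _
    set δ := ε / (2 * (M + 1)) with hδ
    have hδpos : 0 < δ := by positivity
    -- finite approximation of u
    obtain ⟨F, hF⟩ : ∃ F : Finset (PontryaginDual X),
        ‖u - ∑ η ∈ F, B.repr u η • B η‖ < δ := by
      have h1 := B.hasSum_repr u
      rw [HasSum] at h1
      obtain ⟨F, hF⟩ := (Metric.tendsto_nhds.mp h1 δ hδpos).exists
      exact ⟨F, by rw [norm_sub_rev, ← dist_eq_norm]; exact hF⟩
    set a : PontryaginDual X → ℂ := fun η => B.repr u η with ha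
    set u' : Lp ℂ 2 μ := ∑ η ∈ F, a η • B η with hu'
    set s : PontryaginDual X → Lp ℂ 2 μ :=
      fun ξ₀ => ∑ η ∈ F, (a η * ((η x₀⁻¹ : Circle) : ℂ)) • B (η * ξ₀) with hs
    -- the residue has constant norm ‖u - u'‖
    have hres : ∀ ξ₀, ‖E ξ₀ - s ξ₀‖ = ‖u - u'‖ := by
      intro ξ₀
      apply normAux ξ₀ (u - u')
      simp only [hs]
      have hsub : ⇑(u - u') =ᵐ[μ] fun y => (u : X → ℂ) y - ∑ η ∈ F, a η * (η y : ℂ) := by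
        have h2' := hsum_coe F a id
        simp only [id_eq] at h2'
        rw [← hu'] at h2'
        filter_upwards [Lp.coeFn_sub u u', h2'] with y h1 h2
        rw [h1, Pi.sub_apply, h2]
      have hsub' := hcomp_ae _ _ hsub
      have h3' := hsum_coe F (fun η => a η * ((η x₀⁻¹ : Circle) : ℂ)) (fun η => η * ξ₀)
      filter_upwards [Lp.coeFn_sub (E ξ₀) (∑ η ∈ F, (a η * ((η x₀⁻¹ : Circle) : ℂ)) • B (η * ξ₀)), hE ξ₀,
        h3', hsub'] with x h1 h2 h3 h4
      rw [h1, Pi.sub_apply, h2, h3, h4, mul_sub]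
      congr 1
      rw [Finset.mul_sum]
      refine Finset.sum_congr rfl fun η _ => ?_
      have e1 : ((η * ξ₀) x : ℂ) = (η x : ℂ) * (ξ₀ x : ℂ) := by
        norm_cast
      have e2 : (η (x * x₀⁻¹) : ℂ) = (η x : ℂ) * ((η x₀⁻¹ : Circle) : ℂ) := by
        rw [map_mul]; norm_cast
      rw [e1, e2]; ring
    -- the key estimate
    have hest : ∀ ξ₀, ‖L₀ (E ξ₀)‖ ≤
        (∑ η ∈ F, ‖a η‖ * (‖ψ (η * ξ₀)‖ * ‖φ‖)) + M * δ := by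
      intro ξ₀
      have hsplit : L₀ (E ξ₀) = L₀ (s ξ₀) + L₀ (E ξ₀ - s ξ₀) := by
        rw [← map_add]; congr 1; abel
      calc ‖L₀ (E ξ₀)‖ ≤ ‖L₀ (s ξ₀)‖ + ‖L₀ (E ξ₀ - s ξ₀)‖ := by
            rw [hsplit]; exact norm_add_le _ _
        _ ≤ (∑ η ∈ F, ‖a η‖ * (‖ψ (η * ξ₀)‖ * ‖φ‖)) + M * δ := by
            gcongr
            · -- main part
              simp only [hs]
              simp only [map_sum, _root_.map_smul]
              refine (norm_sum_le _ _).trans ?_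
              refine Finset.sum_le_sum fun η _ => ?_
              rw [norm_smul, norm_mul]
              have : ‖((η x₀⁻¹ : Circle) : ℂ)‖ = 1 := by
                simp [Circle.norm_coe]
              rw [this, mul_one]
              exact mul_le_mul_of_nonneg_left (hLB _) (norm_nonneg _)
            · -- residue
              calc ‖L₀ (E ξ₀ - s ξ₀)‖ ≤ M * ‖E ξ₀ - s ξ₀‖ := L₀.le_opNorm _
                _ = M * ‖u - u'‖ := by rw [hres ξ₀]
                _ ≤ M * δ := mul_le_mul_of_nonneg_left hF.le hM0
    -- the main part tends to zero
    have hsum0 : Tendsto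
        (fun ξ₀ => ∑ η ∈ F, ‖a η‖ * (‖ψ (η * ξ₀)‖ * ‖φ‖)) 𝓕 (𝓝 0) := by
      have h1 : ∀ η ∈ F, Tendsto
          (fun ξ₀ => ‖a η‖ * (‖ψ (η * ξ₀)‖ * ‖φ‖)) 𝓕 (𝓝 0) := by
        intro η _
        simpa using (((hψη η).mul_const ‖φ‖).const_mul ‖a η‖)
      simpa using tendsto_finset_sum F h1
    have hMδ : M * δ < ε / 2 := by
      have h2 : M * δ = M * ε / (2 * (M + 1)) := by rw [hδ]; ring
      rw [h2, div_lt_div_iff₀ (by positivity) two_pos]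
      nlinarith [hε]
    filter_upwards [Metric.tendsto_nhds.mp hsum0 (ε / 2) (half_pos hε)] with ξ₀ hξ₀
    rw [Real.dist_eq, sub_zero] at hξ₀ ⊢
    rw [abs_of_nonneg (norm_nonneg _)]
    have h3 := lt_of_abs_lt hξ₀
    have h4 := hest ξ₀
    linarith
  -- Step 2 : the span satisfies the conclusion
  have hspan : ∀ L' ∈ Submodule.span ℂ S, Tendsto (fun ξ₀ => ‖L' (E ξ₀)‖) 𝓕 (𝓝 0) := by
    intro L' hL'
    induction hL' using Submodule.span_induction with
    | mem T hT => exact hgen T hT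
    | zero =>
        have hz : (fun ξ₀ : PontryaginDual X => ‖(0 : Lp ℂ 2 μ →L[ℂ] Lp ℂ 2 μ) (E ξ₀)‖)
            = fun _ => (0:ℝ) := by
          funext ξ₀
          rw [ContinuousLinearMap.zero_apply, norm_zero]
        rw [hz]
        exact tendsto_const_nhds
    | add T T' _ _ hT hT' =>
        refine squeeze_zero (fun _ => norm_nonneg _) (fun ξ₀ => ?_) (by simpa using hT.add hT')
        simp only [ContinuousLinearMap.add_apply]
        exact norm_add_le _ _
    | smul c T _ hT =>
        refine squeeze_zero (fun _ => norm_nonneg _) (fun ξ₀ => ?_)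
          (by simpa using hT.const_mul ‖c‖)
        simp only [ContinuousLinearMap.smul_apply, norm_smul]
        exact le_rfl
  -- Step 3 : pass to the closure
  rw [Metric.tendsto_nhds]
  intro ε hε
  have hu1 : (0:ℝ) < ‖u‖ + 1 := by positivity
  set δ := ε / (2 * (‖u‖ + 1)) with hδ
  have hδpos : 0 < δ := by positivity
  obtain ⟨L', hL's, hd⟩ := Metric.mem_closure_iff.mp hL δ hδpos
  have h1 := Metric.tendsto_nhds.mp (hspan L' hL's) (ε / 2) (half_pos hε)
  filter_upwards [h1] with ξ₀ h2
  rw [Real.dist_eq, sub_zero] at h2 ⊢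
  have h2' := lt_of_abs_lt h2
  rw [abs_of_nonneg (norm_nonneg _)]
  have hE1 : ‖E ξ₀‖ = ‖u‖ := normAux ξ₀ u (E ξ₀) (hE ξ₀)
  have hsplit : L (E ξ₀) = (L - L') (E ξ₀) + L' (E ξ₀) := by
    simp
  have hbound : ‖(L - L') (E ξ₀)‖ ≤ ‖L - L'‖ * ‖E ξ₀‖ := (L - L').le_opNorm _
  have hd' : ‖L - L'‖ < δ := by rwa [← dist_eq_norm]
  have hmain : ‖L - L'‖ * ‖E ξ₀‖ < ε / 2 := by
    rw [hE1]
    calc ‖L - L'‖ * ‖u‖ ≤ ‖L - L'‖ * (‖u‖ + 1) := by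
          exact mul_le_mul_of_nonneg_left (by linarith) (norm_nonneg _)
      _ < δ * (‖u‖ + 1) := by
          exact mul_lt_mul_of_pos_right hd' hu1
      _ = ε / 2 := by rw [hδ]; field_simp
  calc ‖L (E ξ₀)‖ ≤ ‖(L - L') (E ξ₀)‖ + ‖L' (E ξ₀)‖ := by
        rw [hsplit]; exact norm_add_le _ _
    _ < ε / 2 + ε / 2 := by
        have := hbound.trans_lt hmain
        linarith
    _ = ε := by ring
end

section
/- Let f be a symbol with vanishing Ω-oscillation, let T ∈ B(L²(X)) be the quantization Op(f) of f, and let u ∈ L²(X), x₀ ∈ X. Then ‖T(E(x₀,ξ₀)u) − f(·,ξ₀)·(E(x₀,ξ₀)u)‖_{L²(X)} tends to 0 along the filter 𝓕_Ω (in the variable ξ₀ ∈ Ξ), where f(·,ξ₀)·v denotes pointwise multiplication of v by the continuous function x ↦ f(x,ξ₀). -/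
open MeasureTheory Filter Topology

set_option maxHeartbeats 1000000 in
/-- **Lemma 3.3 (`wildemir`).**  With `X` a compact Hausdorff abelian group with Haar
probability measure, `Ξ = PontryaginDual X` (discrete) with character Hilbert basis `B`
of `L²(X)`, and `Ω` a nonempty closed invariant subset of the corona of `βΞ`: if `f` is a
symbol of vanishing `Ω`-oscillation with quantization `T = Op f`, `u ∈ L²(X)`, `x₀ ∈ X`,
`E ξ₀ = E(x₀,ξ₀)u` and `M ξ₀ = f(·,ξ₀)·(E ξ₀)`, then `‖T (E ξ₀) - M ξ₀‖ → 0` along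
the filter `𝓕_Ω` in the variable `ξ₀`. -/
theorem quantization_asymptotically_multiplication
    {X : Type} [CommGroup X] [TopologicalSpace X] [IsTopologicalGroup X]
    [CompactSpace X] [T2Space X] [MeasurableSpace X] [BorelSpace X]
    (μ : Measure X) [μ.IsHaarMeasure] [IsProbabilityMeasure μ]
    [DiscreteTopology (PontryaginDual X)]
    -- the characters form an orthonormal Hilbert basis of `L²(X)`
    (B : HilbertBasis (PontryaginDual X) ℂ (Lp ℂ 2 μ))
    (hB : ∀ ζ : PontryaginDual X, ⇑(B ζ) =ᵐ[μ] fun x => (ζ x : ℂ))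
    -- `Ω` : a nonempty closed invariant subset of the corona `βΞ \ Ξ`
    (Ω : Set (StoneCech (PontryaginDual X)))
    (hΩne : Ω.Nonempty) (hΩcl : IsClosed Ω)
    (hΩcorona : Ω ⊆ (Set.range
      (stoneCechUnit : PontryaginDual X → StoneCech (PontryaginDual X)))ᶜ)
    (hΩinv : ∀ η : PontryaginDual X,
      stoneCechExtend (continuous_of_discreteTopology
        (f := fun ξ : PontryaginDual X => stoneCechUnit (η * ξ))) '' Ω ⊆ Ω)
    -- `f` is a symbol : bounded, and continuous in `x` uniformly in `ξ`
    (f : X → PontryaginDual X → ℂ)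
    (hfb : ∃ C, ∀ x ξ, ‖f x ξ‖ ≤ C)
    (hfc : ∀ ε > 0, ∀ x₀ : X, ∀ᶠ x in 𝓝 x₀, ∀ ξ, ‖f x ξ - f x₀ ξ‖ < ε)
    -- `f` has vanishing `Ω`-oscillation
    (hosc : ∀ ζ : PontryaginDual X,
      Filter.limsup (fun ξ => ⨆ x : X, ‖f x (ξ * ζ) - f x ξ‖)
        (Filter.comap stoneCechUnit (𝓝ˢ Ω)) = 0)
    -- `T = Op f` is the quantization of `f`
    (T : Lp ℂ 2 μ →L[ℂ] Lp ℂ 2 μ)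
    (hT : ∀ ζ : PontryaginDual X, ⇑(T (B ζ)) =ᵐ[μ] fun x => f x ζ * (ζ x : ℂ))
    -- `E ξ₀ = E(x₀,ξ₀)u` and `M ξ₀ = f(·,ξ₀)·(E ξ₀)`
    (u : Lp ℂ 2 μ) (x₀ : X)
    (E : PontryaginDual X → Lp ℂ 2 μ)
    (hE : ∀ ξ₀ : PontryaginDual X,
      ⇑(E ξ₀) =ᵐ[μ] fun x => (ξ₀ x : ℂ) * (u : X → ℂ) (x * x₀⁻¹))
    (M : PontryaginDual X → Lp ℂ 2 μ)
    (hM : ∀ ξ₀ : PontryaginDual X,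
      ⇑(M ξ₀) =ᵐ[μ] fun x => f x ξ₀ * (E ξ₀ : X → ℂ) x) :
    Filter.Tendsto (fun ξ₀ => ‖T (E ξ₀) - M ξ₀‖)
      (Filter.comap stoneCechUnit (𝓝ˢ Ω)) (𝓝 0) := by
  classical
  obtain ⟨C₀, hC₀⟩ := hfb
  set C : ℝ := max C₀ 0 with hCdef
  have hC : ∀ x ξ, ‖f x ξ‖ ≤ C := fun x ξ => (hC₀ x ξ).trans (le_max_left _ _)
  have hCnn : (0:ℝ) ≤ C := le_max_right _ _
  -- continuity of `f · ξ`
  have hfcont : ∀ ξ, Continuous fun x => f x ξ := by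
    intro ξ
    rw [continuous_iff_continuousAt]
    intro x₁
    rw [Metric.continuousAt_iff']
    intro ε hε
    filter_upwards [hfc ε hε x₁] with x hx
    simpa [Complex.dist_eq] using hx ξ
  -- boundedness / nonnegativity of the oscillation sup
  set S : PontryaginDual X → PontryaginDual X → ℝ :=
    fun ξ ζ => ⨆ x : X, ‖f x (ξ * ζ) - f x ξ‖ with hSdef
  have hSbdd : ∀ ξ ζ, BddAbove (Set.range fun x : X => ‖f x (ξ * ζ) - f x ξ‖) := by
    intro ξ ζ
    refine ⟨2 * C, ?_⟩
    rintro r ⟨x, rfl⟩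
    calc ‖f x (ξ * ζ) - f x ξ‖
        ≤ ‖f x (ξ * ζ)‖ + ‖f x ξ‖ := by
          simpa using norm_sub_le (f x (ξ * ζ)) (f x ξ)
      _ ≤ C + C := add_le_add (hC _ _) (hC _ _)
      _ = 2 * C := by ring
  have hSle : ∀ ξ ζ (x : X), ‖f x (ξ * ζ) - f x ξ‖ ≤ S ξ ζ :=
    fun ξ ζ x => le_ciSup (hSbdd ξ ζ) x
  have hSnn : ∀ ξ ζ, 0 ≤ S ξ ζ :=
    fun ξ ζ => le_trans (norm_nonneg _) (hSle ξ ζ 1)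
  have hSub : ∀ ξ ζ, S ξ ζ ≤ 2 * C := by
    intro ξ ζ
    exact ciSup_le fun x => by
      calc ‖f x (ξ * ζ) - f x ξ‖
          ≤ ‖f x (ξ * ζ)‖ + ‖f x ξ‖ := by
            simpa using norm_sub_le (f x (ξ * ζ)) (f x ξ)
        _ ≤ C + C := add_le_add (hC _ _) (hC _ _)
        _ = 2 * C := by ring
  -- coe of finite sums in Lp
  have coe_sum : ∀ (F : Finset (PontryaginDual X)) (v : PontryaginDual X → Lp ℂ 2 μ),
      ⇑(∑ ζ ∈ F, v ζ) =ᵐ[μ] fun x => ∑ ζ ∈ F, (v ζ : X → ℂ) x := by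
    intro F v
    induction F using Finset.induction_on with
    | empty => exact Lp.coeFn_zero (E := ℂ) (p := 2) (μ := μ)
    | insert a s hnot ih =>
      rw [Finset.sum_insert hnot]
      filter_upwards [Lp.coeFn_add (v a) (∑ ζ ∈ s, v ζ), ih] with x h1 h2
      rw [h1]
      simp only [Pi.add_apply]
      rw [h2, Finset.sum_insert hnot]

  -- character coercion continuity
  have hcharc : ∀ η : PontryaginDual X, Continuous fun x => ((η x : ℂ)) := by
    intro η; continuity
  -- coe of sums of scaled basis vectors
  have coe_sum' : ∀ (F : Finset (PontryaginDual X)) (a : PontryaginDual X → ℂ)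
      (g : PontryaginDual X → PontryaginDual X),
      ⇑(∑ ζ ∈ F, a ζ • B (g ζ)) =ᵐ[μ] fun x => ∑ ζ ∈ F, a ζ * ((g ζ) x : ℂ) := by
    intro F a g
    refine (coe_sum F _).trans ?_
    have h : ∀ᵐ x ∂μ, ∀ ζ ∈ F, ⇑(a ζ • B (g ζ)) x = a ζ * ((g ζ) x : ℂ) := by
      rw [eventually_all_finset]
      intro ζ _
      filter_upwards [Lp.coeFn_smul (a ζ) (B (g ζ)), hB (g ζ)] with x h1 h2
      rw [h1]; simp [h2]
    filter_upwards [h] with x hx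
    exact Finset.sum_congr rfl hx
  have hosc' : ∀ ζ, Filter.limsup (fun ξ => S ξ ζ)
      (Filter.comap stoneCechUnit (𝓝ˢ Ω)) = 0 := fun ζ => hosc ζ
  rw [Metric.tendsto_nhds]
  intro ε hε
  set A : ℝ := ‖T‖ + C with hA
  have hAnn : (0:ℝ) ≤ A := add_nonneg (norm_nonneg _) hCnn
  have hδpos : 0 < ε / (2 * (A + 1)) := by positivity
  set δ := ε / (2 * (A + 1)) with hδ
  obtain ⟨F, hF⟩ := (Metric.tendsto_nhds.mp (B.hasSum_repr u) δ hδpos).exists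
  set c : PontryaginDual X → ℂ := fun ζ => B.repr u ζ with hc
  set w : Lp ℂ 2 μ := ∑ ζ ∈ F, c ζ • B ζ with hwdef
  have hw : ‖u - w‖ < δ := by
    rw [norm_sub_rev, ← dist_eq_norm]
    exact hF
  set wrep : X → ℂ := fun x => ∑ ζ ∈ F, c ζ * (ζ x : ℂ) with hwrep
  have coew : ⇑w =ᵐ[μ] wrep := coe_sum' F c (fun ζ => ζ)
  have hwrepc : Continuous wrep := by
    apply continuous_finset_sum
    intro ζ _
    exact continuous_const.mul (hcharc ζ)
  set K : ℝ := ∑ ζ ∈ F, ‖c ζ‖ with hK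
  have hKnn : (0:ℝ) ≤ K := Finset.sum_nonneg fun ζ _ => norm_nonneg _
  have hbpos : 0 < ε / (2 * (K + 1)) := by positivity
  set b : ℝ := ε / (2 * (K + 1)) with hb
  have hev : ∀ᶠ ξ₀ in Filter.comap stoneCechUnit (𝓝ˢ Ω), ∀ ζ ∈ F, S ξ₀ ζ < b := by
    rw [eventually_all_finset]
    intro ζ _
    refine eventually_lt_of_limsup_lt ?_ ?_
    · rw [hosc' ζ]; exact hbpos
    · exact isBoundedUnder_of ⟨2 * C, fun ξ => hSub ξ ζ⟩
  filter_upwards [hev] with ξ₀ hξ₀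
  rw [Real.dist_0_eq_abs, abs_norm]
  -- now the per-`ξ₀` estimates
  set EF : Lp ℂ 2 μ := ∑ ζ ∈ F, (c ζ * ((ζ x₀ : ℂ))⁻¹) • B (ξ₀ * ζ) with hEF
  have coe_EF : ⇑EF =ᵐ[μ]
      fun x => ∑ ζ ∈ F, (c ζ * ((ζ x₀ : ℂ))⁻¹) * (((ξ₀ * ζ) x : ℂ)) :=
    coe_sum' F _ (fun ζ => ξ₀ * ζ)
  have key : ∀ x : X, (∑ ζ ∈ F, (c ζ * ((ζ x₀ : ℂ))⁻¹) * (((ξ₀ * ζ) x : ℂ)))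
      = (ξ₀ x : ℂ) * wrep (x * x₀⁻¹) := by
    intro x
    rw [hwrep]
    simp only [Finset.mul_sum]
    refine Finset.sum_congr rfl fun ζ _ => ?_
    have h1 : (((ξ₀ * ζ) x : ℂ)) = (ξ₀ x : ℂ) * (ζ x : ℂ) := by
      norm_cast
    have h2 : ((ζ (x * x₀⁻¹) : ℂ)) = (ζ x : ℂ) * ((ζ x₀ : ℂ))⁻¹ := by
      rw [map_mul, map_inv, Circle.coe_mul, Circle.coe_inv]
    rw [h1, h2]
    have hne : ((ζ x₀ : ℂ)) ≠ 0 := Circle.coe_ne_zero _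
    field_simp
  have hdiff1 : ⇑(E ξ₀ - EF) =ᵐ[μ]
      fun x => (ξ₀ x : ℂ) * (((u : X → ℂ) - wrep) (x * x₀⁻¹)) := by
    filter_upwards [Lp.coeFn_sub (E ξ₀) EF, hE ξ₀, coe_EF] with x h1 h2 h3
    rw [h1]
    simp only [Pi.sub_apply]
    rw [h2, h3, key x]
    ring
  have hmp : MeasurePreserving (fun x : X => x * x₀⁻¹) μ μ :=
    measurePreserving_mul_right μ x₀⁻¹
  have hgsm : AEStronglyMeasurable ((u : X → ℂ) - wrep) μ :=
    (Lp.aestronglyMeasurable u).sub hwrepc.aestronglyMeasurable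
  have hnorm1 : ‖E ξ₀ - EF‖ = ‖u - w‖ := by
    rw [Lp.norm_def, Lp.norm_def]
    congr 1
    calc eLpNorm (⇑(E ξ₀ - EF)) 2 μ
        = eLpNorm (fun x => (ξ₀ x : ℂ) * (((u : X → ℂ) - wrep) (x * x₀⁻¹))) 2 μ :=
          eLpNorm_congr_ae hdiff1
      _ = eLpNorm (((u : X → ℂ) - wrep) ∘ (fun x => x * x₀⁻¹)) 2 μ := by
          refine eLpNorm_congr_norm_ae (Filter.Eventually.of_forall fun x => ?_)
          simp [map_mul, Circle.norm_coe, Function.comp]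
      _ = eLpNorm ((u : X → ℂ) - wrep) 2 μ := eLpNorm_comp_measurePreserving hgsm hmp
      _ = eLpNorm (⇑(u - w)) 2 μ := by
          refine (eLpNorm_congr_ae ?_).symm
          filter_upwards [Lp.coeFn_sub u w, coew] with x h1 h2
          rw [h1]
          simp [h2]
  have hmemP : ∀ ζ : PontryaginDual X,
      MemLp (fun x => f x ξ₀ * (((ξ₀ * ζ) x : ℂ))) 2 μ := by
    intro ζ
    refine MemLp.of_bound (((hfcont ξ₀).mul (hcharc (ξ₀ * ζ))).aestronglyMeasurable) C
      (Filter.Eventually.of_forall fun x => ?_)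
    rw [norm_mul]
    calc ‖f x ξ₀‖ * ‖(((ξ₀ * ζ) x : ℂ))‖ = ‖f x ξ₀‖ := by
          simp [Circle.norm_coe]
      _ ≤ C := hC _ _
  set P : PontryaginDual X → Lp ℂ 2 μ := fun ζ => (hmemP ζ).toLp _ with hP
  set MF : Lp ℂ 2 μ := ∑ ζ ∈ F, (c ζ * ((ζ x₀ : ℂ))⁻¹) • P ζ with hMF
  have coe_MF : ⇑MF =ᵐ[μ]
      fun x => ∑ ζ ∈ F, (c ζ * ((ζ x₀ : ℂ))⁻¹) * (f x ξ₀ * (((ξ₀ * ζ) x : ℂ))) := by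
    refine (coe_sum F _).trans ?_
    have h : ∀ᵐ x ∂μ, ∀ ζ ∈ F, ⇑((c ζ * ((ζ x₀ : ℂ))⁻¹) • P ζ) x
        = (c ζ * ((ζ x₀ : ℂ))⁻¹) * (f x ξ₀ * (((ξ₀ * ζ) x : ℂ))) := by
      rw [eventually_all_finset]
      intro ζ _
      filter_upwards [Lp.coeFn_smul (c ζ * ((ζ x₀ : ℂ))⁻¹) (P ζ), (hmemP ζ).coeFn_toLp]
        with x h1 h2
      rw [h1]
      simp only [Pi.smul_apply, smul_eq_mul]
      rw [hP]
      simp only []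
      rw [h2]
    filter_upwards [h] with x hx
    exact Finset.sum_congr rfl hx
  have hMMF : ‖M ξ₀ - MF‖ ≤ C * ‖E ξ₀ - EF‖ := by
    refine Lp.norm_le_mul_norm_of_ae_le_mul ?_
    filter_upwards [Lp.coeFn_sub (M ξ₀) MF, hM ξ₀, coe_MF, Lp.coeFn_sub (E ξ₀) EF, coe_EF]
      with x h1 h2 h3 h4 h5
    rw [h1]
    simp only [Pi.sub_apply]
    rw [h2, h3, h4]
    simp only [Pi.sub_apply]
    rw [h5]
    have heq : f x ξ₀ * (E ξ₀ : X → ℂ) x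
        - ∑ ζ ∈ F, (c ζ * ((ζ x₀ : ℂ))⁻¹) * (f x ξ₀ * (((ξ₀ * ζ) x : ℂ)))
        = f x ξ₀ * ((E ξ₀ : X → ℂ) x
          - ∑ ζ ∈ F, (c ζ * ((ζ x₀ : ℂ))⁻¹) * (((ξ₀ * ζ) x : ℂ))) := by
      rw [mul_sub, Finset.mul_sum]
      congr 1
      refine Finset.sum_congr rfl fun ζ _ => by ring
    rw [heq, norm_mul]
    refine mul_le_mul_of_nonneg_right ?_ (norm_nonneg _)
    simpa using hC x ξ₀
  have hPTnorm : ∀ ζ ∈ F, ‖T (B (ξ₀ * ζ)) - P ζ‖ ≤ S ξ₀ ζ := by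
    intro ζ _
    have hbd : ∀ᵐ x ∂μ, ‖⇑(T (B (ξ₀ * ζ)) - P ζ) x‖ ≤ S ξ₀ ζ := by
      filter_upwards [Lp.coeFn_sub (T (B (ξ₀ * ζ))) (P ζ), hT (ξ₀ * ζ), (hmemP ζ).coeFn_toLp]
        with x h1 h2 h3
      rw [h1]
      simp only [Pi.sub_apply]
      rw [h2]
      have : ⇑(P ζ) x = f x ξ₀ * (((ξ₀ * ζ) x : ℂ)) := h3
      rw [this]
      have heq : f x (ξ₀ * ζ) * (((ξ₀ * ζ) x : ℂ)) - f x ξ₀ * (((ξ₀ * ζ) x : ℂ))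
          = (f x (ξ₀ * ζ) - f x ξ₀) * (((ξ₀ * ζ) x : ℂ)) := by ring
      rw [heq, norm_mul]
      calc ‖f x (ξ₀ * ζ) - f x ξ₀‖ * ‖(((ξ₀ * ζ) x : ℂ))‖
          = ‖f x (ξ₀ * ζ) - f x ξ₀‖ := by
            simp [Circle.norm_coe]
        _ ≤ S ξ₀ ζ := hSle ξ₀ ζ x
    calc ‖T (B (ξ₀ * ζ)) - P ζ‖
        ≤ (measureUnivNNReal μ : ℝ) ^ ((2 : ENNReal).toReal)⁻¹ * S ξ₀ ζ :=
          Lp.norm_le_of_ae_bound (hSnn _ _) hbd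
      _ = S ξ₀ ζ := by
          simp [measureUnivNNReal, measure_univ]
  have hTEF : T EF = ∑ ζ ∈ F, (c ζ * ((ζ x₀ : ℂ))⁻¹) • T (B (ξ₀ * ζ)) := by
    rw [hEF, map_sum]
    exact Finset.sum_congr rfl fun ζ _ => map_smul T _ _
  have hTEFMF : ‖T EF - MF‖ ≤ ∑ ζ ∈ F, ‖c ζ‖ * S ξ₀ ζ := by
    rw [hTEF, hMF, ← Finset.sum_sub_distrib]
    have heq : ∀ ζ ∈ F, (c ζ * ((ζ x₀ : ℂ))⁻¹) • T (B (ξ₀ * ζ))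
        - (c ζ * ((ζ x₀ : ℂ))⁻¹) • P ζ
        = (c ζ * ((ζ x₀ : ℂ))⁻¹) • (T (B (ξ₀ * ζ)) - P ζ) :=
      fun ζ _ => (smul_sub _ _ _).symm
    rw [Finset.sum_congr rfl heq]
    refine (norm_sum_le _ _).trans (Finset.sum_le_sum fun ζ hζ => ?_)
    rw [norm_smul]
    have hcoef : ‖c ζ * ((ζ x₀ : ℂ))⁻¹‖ = ‖c ζ‖ := by
      simp [map_mul, map_inv₀, Circle.norm_coe]
    rw [hcoef]
    exact mul_le_mul_of_nonneg_left (hPTnorm ζ hζ) (norm_nonneg _)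
  -- assemble
  have hsplit : T (E ξ₀) - M ξ₀
      = T (E ξ₀ - EF) + (T EF - MF) + (MF - M ξ₀) := by
    rw [map_sub]
    abel
  have htotal : ‖T (E ξ₀) - M ξ₀‖ ≤ A * ‖u - w‖ + ∑ ζ ∈ F, ‖c ζ‖ * S ξ₀ ζ := by
    rw [hsplit]
    calc ‖T (E ξ₀ - EF) + (T EF - MF) + (MF - M ξ₀)‖
        ≤ ‖T (E ξ₀ - EF)‖ + ‖T EF - MF‖ + ‖MF - M ξ₀‖ := norm_add₃_le
      _ ≤ ‖T‖ * ‖E ξ₀ - EF‖ + (∑ ζ ∈ F, ‖c ζ‖ * S ξ₀ ζ) + C * ‖E ξ₀ - EF‖ := by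
          have h1 := T.le_opNorm (E ξ₀ - EF)
          have h3 : ‖MF - M ξ₀‖ ≤ C * ‖E ξ₀ - EF‖ := by
            rw [norm_sub_rev]; exact hMMF
          gcongr
      _ = A * ‖u - w‖ + ∑ ζ ∈ F, ‖c ζ‖ * S ξ₀ ζ := by
          rw [hnorm1, hA]; ring
  have hpart1 : A * ‖u - w‖ < ε / 2 := by
    have h1 : A * ‖u - w‖ ≤ A * δ := mul_le_mul_of_nonneg_left hw.le hAnn
    have h2 : A * δ < (A + 1) * δ := by
      have := lt_add_one A
      exact mul_lt_mul_of_pos_right this hδpos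
    have h3 : (A + 1) * δ = ε / 2 := by
      rw [hδ]
      field_simp
    calc A * ‖u - w‖ ≤ A * δ := h1
      _ < (A + 1) * δ := h2
      _ = ε / 2 := h3
  have hpart2 : (∑ ζ ∈ F, ‖c ζ‖ * S ξ₀ ζ) < ε / 2 := by
    have h1 : (∑ ζ ∈ F, ‖c ζ‖ * S ξ₀ ζ) ≤ K * b := by
      rw [hK, Finset.sum_mul]
      refine Finset.sum_le_sum fun ζ hζ => ?_
      exact mul_le_mul_of_nonneg_left (hξ₀ ζ hζ).le (norm_nonneg _)
    have h2 : K * b < (K + 1) * b := mul_lt_mul_of_pos_right (lt_add_one K) hbpos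
    have h3 : (K + 1) * b = ε / 2 := by
      rw [hb]
      field_simp
    calc (∑ ζ ∈ F, ‖c ζ‖ * S ξ₀ ζ) ≤ K * b := h1
      _ < (K + 1) * b := h2
      _ = ε / 2 := h3
  calc ‖T (E ξ₀) - M ξ₀‖ ≤ A * ‖u - w‖ + ∑ ζ ∈ F, ‖c ζ‖ * S ξ₀ ζ := htotal
    _ < ε / 2 + ε / 2 := add_lt_add hpart1 hpart2
    _ = ε := by ring
end

section
/- Let f be a symbol and T its quantization Op(f). For every ζ, ξ₀ ∈ Ξ and x₀ ∈ X, letting u := E(x₀,ξ₀)ζ (so u(x) = ξ₀(x)ζ(x x₀⁻¹)), one has the exact identity ‖T u − f(·,ξ₀)·u‖²_{L²(X)} = ∫_X |f(x, ξ₀ζ) − f(x, ξ₀)|² dx, where f(·,ξ₀)·u denotes pointwise multiplication of u by x ↦ f(x,ξ₀). -/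
open MeasureTheory Filter Topology

/-- **The oscillation identity** (the computation inside the proof of Lemma 3.3).
With `X` a compact Hausdorff abelian group with Haar probability measure and
`Ξ = PontryaginDual X` with character Hilbert basis `B` of `L²(X)`: if `f` is a
symbol with quantization `T = Op f`, `ζ, ξ₀ ∈ Ξ`, `x₀ ∈ X`, `u = E(x₀,ξ₀)ζ` (i.e.
`u(x) = ξ₀(x) ζ(x x₀⁻¹)`) and `v = f(·,ξ₀)·u`, then
`‖T u - v‖² = ∫_X |f(x,ξ₀ζ) - f(x,ξ₀)|² dx`. -/
theorem quantization_oscillation_identity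
    {X : Type} [CommGroup X] [TopologicalSpace X] [IsTopologicalGroup X]
    [CompactSpace X] [T2Space X] [MeasurableSpace X] [BorelSpace X]
    (μ : Measure X) [μ.IsHaarMeasure] [IsProbabilityMeasure μ]
    -- the characters form an orthonormal Hilbert basis of `L²(X)`
    (B : HilbertBasis (PontryaginDual X) ℂ (Lp ℂ 2 μ))
    (hB : ∀ η : PontryaginDual X, ⇑(B η) =ᵐ[μ] fun x => (η x : ℂ))
    -- `f` is a symbol : bounded, and continuous in `x` uniformly in `ξ`
    (f : X → PontryaginDual X → ℂ)
    (hfb : ∃ C, ∀ x ξ, ‖f x ξ‖ ≤ C)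
    (hfc : ∀ ε > 0, ∀ x' : X, ∀ᶠ x in 𝓝 x', ∀ ξ, ‖f x ξ - f x' ξ‖ < ε)
    -- `T = Op f` is the quantization of `f`
    (T : Lp ℂ 2 μ →L[ℂ] Lp ℂ 2 μ)
    (hT : ∀ η : PontryaginDual X, ⇑(T (B η)) =ᵐ[μ] fun x => f x η * (η x : ℂ))
    -- `u = E(x₀,ξ₀)ζ` and `v = f(·,ξ₀)·u`
    (ζ ξ₀ : PontryaginDual X) (x₀ : X)
    (u : Lp ℂ 2 μ)
    (hu : ⇑u =ᵐ[μ] fun x => (ξ₀ x : ℂ) * (ζ (x * x₀⁻¹) : ℂ))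
    (v : Lp ℂ 2 μ)
    (hv : ⇑v =ᵐ[μ] fun x => f x ξ₀ * (u : X → ℂ) x) :
    ‖T u - v‖ ^ 2 = ∫ x, ‖f x (ξ₀ * ζ) - f x ξ₀‖ ^ 2 ∂μ := by
  set c : ℂ := (ζ x₀⁻¹ : ℂ) with hc
  have hcabs : ‖c‖ = 1 := Circle.norm_coe _
  -- u = c • B (ξ₀ * ζ)
  have hu' : ⇑u =ᵐ[μ] fun x => c * ((ξ₀ * ζ) x : ℂ) := by
    refine hu.trans (Eventually.of_forall fun x => ?_)
    have : (ξ₀ * ζ) x = ξ₀ x * ζ x := rfl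
    simp only [this, map_mul ζ, Circle.coe_mul]
    ring
  have hueq : u = c • B (ξ₀ * ζ) := by
    apply Lp.ext
    refine hu'.trans ?_
    filter_upwards [Lp.coeFn_smul c (B (ξ₀ * ζ)), hB (ξ₀ * ζ)] with x h1 h2
    simp [h1, h2]
  -- key a.e. formula for T u - v
  have key : ⇑(T u - v) =ᵐ[μ]
      fun x => c * ((ξ₀ * ζ) x : ℂ) * (f x (ξ₀ * ζ) - f x ξ₀) := by
    have hTu : ⇑(T u) =ᵐ[μ] fun x => c * (f x (ξ₀ * ζ) * ((ξ₀ * ζ) x : ℂ)) := by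
      rw [hueq, ContinuousLinearMap.map_smul]
      filter_upwards [Lp.coeFn_smul c (T (B (ξ₀ * ζ))), hT (ξ₀ * ζ)] with x h1 h2
      simp [h1, h2]
    filter_upwards [Lp.coeFn_sub (T u) v, hTu, hv, hu'] with x h1 h2 h3 h4
    simp only [h1, Pi.sub_apply, h2, h3, h4]
    ring
  -- norm computation
  have h1 : ‖T u - v‖ ^ 2 = RCLike.re (inner (𝕜 := ℂ) (T u - v) (T u - v)) :=
    (inner_self_eq_norm_sq (𝕜 := ℂ) _).symm
  rw [h1, L2.inner_def, ← integral_re (L2.integrable_inner _ _)]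
  refine integral_congr_ae ?_
  filter_upwards [key] with x hx
  simp only [hx]
  rw [RCLike.inner_apply, RCLike.mul_conj]
  have habs : ‖c * ((ξ₀ * ζ) x : ℂ) * (f x (ξ₀ * ζ) - f x ξ₀)‖
      = ‖f x (ξ₀ * ζ) - f x ξ₀‖ := by
    simp [hcabs, Circle.norm_coe]
  simp only [habs]
  rw [← RCLike.ofReal_pow, RCLike.ofReal_re]
end

section
/- Let f be a symbol and let F̃ : X × βΞ → ℂ be its unique continuous extension (obtained by extending each f(x,·) ∈ ℓ∞(Ξ) continuously to βΞ; F̃ is jointly continuous). Then D^Ω(f) = sup_{(x,ω) ∈ X × Ω} |F̃(x,ω)|. -/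
open Filter Topology

/-- **Lemma 2.2 (`gumustekin`), first part.**  For a symbol `f` on `X × Ξ`
(`X` compact Hausdorff abelian group, `Ξ = PontryaginDual X` discrete) with jointly
continuous extension `Ft` to `X × βΞ`, and a nonempty closed subset `Ω` of the corona,
one has `D^Ω(f) = limsup_{ξ→Ω} sup_x |f(x,ξ)| = sup_{(x,ω) ∈ X × Ω} |Ft(x,ω)|`. -/
theorem symbol_limsup_eq_sup_extension
    {X : Type} [CommGroup X] [TopologicalSpace X] [IsTopologicalGroup X]
    [CompactSpace X] [T2Space X]
    [DiscreteTopology (PontryaginDual X)]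
    (Ω : Set (StoneCech (PontryaginDual X)))
    (hΩne : Ω.Nonempty) (hΩcl : IsClosed Ω)
    (hΩcorona : Ω ⊆ (Set.range
      (stoneCechUnit : PontryaginDual X → StoneCech (PontryaginDual X)))ᶜ)
    -- `f` is a symbol : bounded, and continuous in `x` uniformly in `ξ`
    (f : X → PontryaginDual X → ℂ)
    (hfb : ∃ C, ∀ x ξ, ‖f x ξ‖ ≤ C)
    (hfc : ∀ ε > 0, ∀ x₀ : X, ∀ᶠ x in 𝓝 x₀, ∀ ξ, ‖f x ξ - f x₀ ξ‖ < ε)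
    -- `Ft` : the (jointly) continuous extension of `f` to `X × βΞ`
    (Ft : X × StoneCech (PontryaginDual X) → ℂ) (hFt : Continuous Ft)
    (hext : ∀ (x : X) (ξ : PontryaginDual X), Ft (x, stoneCechUnit ξ) = f x ξ) :
    Filter.limsup (fun ξ => ⨆ x : X, ‖f x ξ‖)
        (Filter.comap stoneCechUnit (𝓝ˢ Ω))
      = ⨆ (x : X) (ω : Ω), ‖Ft (x, (ω : StoneCech (PontryaginDual X)))‖ := by
  classical
  obtain ⟨C, hC⟩ := hfb
  obtain ⟨ω₀, hω₀⟩ := hΩne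
  haveI : Nonempty Ω := ⟨⟨ω₀, hω₀⟩⟩
  have hdense : Dense (Set.range (stoneCechUnit : PontryaginDual X → _)) :=
    denseRange_stoneCechUnit
  set h : PontryaginDual X → ℝ := fun ξ => ⨆ x : X, ‖f x ξ‖ with hh
  set M : ℝ := ⨆ (x : X) (ω : Ω), ‖Ft (x, (ω : StoneCech (PontryaginDual X)))‖ with hM
  -- |Ft| ≤ C everywhere
  have hFtC : ∀ x ω, ‖Ft (x, ω)‖ ≤ C := by
    intro x ω
    have hcl : IsClosed {ω' | ‖Ft (x, ω')‖ ≤ C} :=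
      isClosed_le (continuous_norm.comp (hFt.comp (Continuous.prodMk_right x))) continuous_const
    have hsub : Set.range (stoneCechUnit : PontryaginDual X → _) ⊆
        {ω' | ‖Ft (x, ω')‖ ≤ C} := by
      rintro _ ⟨ξ, rfl⟩
      simpa [hext] using hC x ξ
    exact hcl.closure_subset_iff.mpr hsub (hdense ω)
  have hbdd1 : ∀ x : X, BddAbove (Set.range fun ω : Ω =>
      ‖Ft (x, (ω : StoneCech (PontryaginDual X)))‖) := by
    intro x; exact ⟨C, by rintro _ ⟨ω, rfl⟩; exact hFtC x ω⟩
  have hbdd2 : BddAbove (Set.range fun x : X => ⨆ ω : Ω,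
      ‖Ft (x, (ω : StoneCech (PontryaginDual X)))‖) := by
    refine ⟨C, ?_⟩
    rintro _ ⟨x, rfl⟩
    exact ciSup_le fun ω => hFtC x ω
  have hleM : ∀ (x : X) (ω : Ω),
      ‖Ft (x, (ω : StoneCech (PontryaginDual X)))‖ ≤ M :=
    fun x ω => le_trans (le_ciSup (hbdd1 x) ω) (le_ciSup hbdd2 x)
  have hbddh : ∀ ξ, BddAbove (Set.range fun x : X => ‖f x ξ‖) :=
    fun ξ => ⟨C, by rintro _ ⟨x, rfl⟩; exact hC x ξ⟩
  have hhC : ∀ ξ, h ξ ≤ C := fun ξ => ciSup_le fun x => hC x ξ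
  have hh0 : ∀ ξ, 0 ≤ h ξ := fun ξ =>
    le_trans (norm_nonneg (f 1 ξ)) (le_ciSup (hbddh ξ) 1)
  have hfh : ∀ x ξ, ‖f x ξ‖ ≤ h ξ := fun x ξ => le_ciSup (hbddh ξ) x
  -- the filter is NeBot
  have hNB : (Filter.comap (stoneCechUnit : PontryaginDual X → _) (𝓝ˢ Ω)).NeBot := by
    refine Filter.comap_neBot fun t ht => ?_
    obtain ⟨U, hUo, hΩU, hUt⟩ := mem_nhdsSet_iff_exists.mp ht
    obtain ⟨_, ⟨ξ, rfl⟩, hξU⟩ := hdense.exists_mem_open hUo ⟨ω₀, hΩU hω₀⟩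
    exact ⟨ξ, hUt hξU⟩
  rw [Filter.limsup_eq]
  have hCmem : ∀ᶠ ξ in Filter.comap (stoneCechUnit : PontryaginDual X → _)
      (𝓝ˢ Ω), h ξ ≤ C := Filter.Eventually.of_forall hhC
  refine le_antisymm ?_ ?_
  · -- sInf ≤ M
    have hbelow : BddBelow {a : ℝ | ∀ᶠ ξ in Filter.comap
        (stoneCechUnit : PontryaginDual X → _) (𝓝ˢ Ω), h ξ ≤ a} := by
      refine ⟨0, fun a ha => ?_⟩
      have ha' : ∀ᶠ ξ in Filter.comap (stoneCechUnit : PontryaginDual X → _)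
          (𝓝ˢ Ω), h ξ ≤ a := ha
      obtain ⟨ξ, hξ⟩ := ha'.exists
      exact le_trans (hh0 ξ) hξ
    refine le_of_forall_pos_le_add fun ε hε => ?_
    refine csInf_le hbelow ?_
    -- tube lemma
    have hopen : IsOpen {p : X × StoneCech (PontryaginDual X) |
        ‖Ft p‖ < M + ε} :=
      isOpen_lt (continuous_norm.comp hFt) continuous_const
    have hsub : Set.univ ×ˢ Ω ⊆ {p : X × StoneCech (PontryaginDual X) |
        ‖Ft p‖ < M + ε} := by
      rintro ⟨x, ω⟩ ⟨-, hω⟩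
      exact lt_of_le_of_lt (hleM x ⟨ω, hω⟩) (lt_add_of_pos_right M hε)
    obtain ⟨u, v, hu, hv, hsu, hsv, huv⟩ :=
      generalized_tube_lemma isCompact_univ (hΩcl.isCompact) hopen hsub
    have hvmem : v ∈ 𝓝ˢ Ω := hv.mem_nhdsSet.mpr hsv
    have : (stoneCechUnit : PontryaginDual X → _) ⁻¹' v ∈
        Filter.comap (stoneCechUnit : PontryaginDual X → _) (𝓝ˢ Ω) :=
      Filter.preimage_mem_comap hvmem
    refine Filter.eventually_iff_exists_mem.mpr ⟨_, this, fun ξ hξ => ?_⟩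
    refine ciSup_le fun x => ?_
    have := huv (Set.mk_mem_prod (hsu (Set.mem_univ x)) hξ)
    rw [Set.mem_setOf_eq, hext] at this
    exact this.le
  · -- M ≤ sInf
    refine le_csInf ⟨C, hCmem⟩ fun a ha => ?_
    have ha' : ∀ᶠ ξ in Filter.comap (stoneCechUnit : PontryaginDual X → _)
        (𝓝ˢ Ω), h ξ ≤ a := ha
    obtain ⟨t, ht, hta⟩ := Filter.eventually_iff_exists_mem.mp ha'
    rw [Filter.mem_comap] at ht
    obtain ⟨s, hs, hst⟩ := ht
    obtain ⟨U, hUo, hΩU, hUs⟩ := mem_nhdsSet_iff_exists.mp hs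
    refine ciSup_le fun x => ciSup_le fun ω => ?_
    have hcl : IsClosed {ω' | ‖Ft (x, ω')‖ ≤ a} :=
      isClosed_le (continuous_norm.comp (hFt.comp (Continuous.prodMk_right x))) continuous_const
    have hsub : U ∩ Set.range (stoneCechUnit : PontryaginDual X → _) ⊆
        {ω' | ‖Ft (x, ω')‖ ≤ a} := by
      rintro _ ⟨hU, ξ, rfl⟩
      have hta' : h ξ ≤ a := hta ξ (hst (hUs hU))
      simpa [hext] using le_trans (hfh x ξ) hta'
    have hωcl : (ω : StoneCech (PontryaginDual X)) ∈
        closure (U ∩ Set.range (stoneCechUnit : PontryaginDual X → _)) :=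
      hdense.open_subset_closure_inter hUo (hΩU ω.2)
    exact hcl.closure_subset_iff.mpr hsub hωcl
end

section
/- Let f be a symbol. There exist a point x₀ ∈ X and an ultrafilter 𝒰 on Ξ finer than the filter 𝓕_Ω such that ξ ↦ |f(x₀,ξ)| tends to D^Ω(f) along 𝒰. -/
open Filter Topology

/-- **Lemma 2.2 (`gumustekin`), second part.**  For a symbol `f` on `X × Ξ`
(`X` compact Hausdorff abelian group, `Ξ = PontryaginDual X` discrete) and a nonempty
closed subset `Ω` of the corona of `βΞ`, there exist a point `x₀ ∈ X` and an
ultrafilter `𝒰` on `Ξ` finer than `𝓕_Ω` along which `|f(x₀,·)|` tends to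
`D^Ω(f) = limsup_{ξ→Ω} sup_x |f(x,ξ)|`. -/
theorem exists_point_ultrafilter_tendsto_symbol_limsup
    {X : Type} [CommGroup X] [TopologicalSpace X] [IsTopologicalGroup X]
    [CompactSpace X] [T2Space X]
    [DiscreteTopology (PontryaginDual X)]
    (Ω : Set (StoneCech (PontryaginDual X)))
    (hΩne : Ω.Nonempty) (hΩcl : IsClosed Ω)
    (hΩcorona : Ω ⊆ (Set.range
      (stoneCechUnit : PontryaginDual X → StoneCech (PontryaginDual X)))ᶜ)
    -- `f` is a symbol : bounded, and continuous in `x` uniformly in `ξ`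
    (f : X → PontryaginDual X → ℂ)
    (hfb : ∃ C, ∀ x ξ, ‖f x ξ‖ ≤ C)
    (hfc : ∀ ε > 0, ∀ x₀ : X, ∀ᶠ x in 𝓝 x₀, ∀ ξ, ‖f x ξ - f x₀ ξ‖ < ε) :
    ∃ (x₀ : X) (𝒰 : Ultrafilter (PontryaginDual X)),
      (𝒰 : Filter (PontryaginDual X)) ≤ Filter.comap stoneCechUnit (𝓝ˢ Ω) ∧
      Filter.Tendsto (fun ξ => ‖f x₀ ξ‖) 𝒰
        (𝓝 (Filter.limsup (fun ξ => ⨆ x : X, ‖f x ξ‖)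
          (Filter.comap stoneCechUnit (𝓝ˢ Ω)))) := by
  obtain ⟨C, hC⟩ := hfb
  set F : Filter (PontryaginDual X) := Filter.comap stoneCechUnit (𝓝ˢ Ω) with hF
  set g : PontryaginDual X → ℝ := fun ξ => ⨆ x : X, ‖f x ξ‖ with hg
  set L : ℝ := Filter.limsup g F with hL
  -- F is NeBot
  have hFne : F.NeBot := by
    refine Filter.comap_neBot fun t ht => ?_
    obtain ⟨p, hp⟩ := hΩne
    have ht' : t ∈ 𝓝 p := (nhds_le_nhdsSet hp) ht
    obtain ⟨ξ, hξ⟩ := denseRange_stoneCechUnit.exists_mem_open isOpen_interior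
      ⟨p, mem_interior_iff_mem_nhds.2 ht'⟩
    exact ⟨ξ, interior_subset hξ⟩
  -- continuity of f (·, ξ)
  have hcont : ∀ ξ, Continuous fun x => f x ξ := by
    intro ξ
    rw [continuous_iff_continuousAt]
    intro x₀
    rw [ContinuousAt, Metric.tendsto_nhds]
    intro ε hε
    filter_upwards [hfc ε hε x₀] with x hx
    rw [dist_eq_norm]
    exact hx ξ
  -- the sup is attained
  have hbdd : ∀ ξ, BddAbove (Set.range fun x => ‖f x ξ‖) := fun ξ =>
    ⟨C, by rintro _ ⟨x, rfl⟩; exact hC x ξ⟩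
  have hle_g : ∀ x ξ, ‖f x ξ‖ ≤ g ξ := fun x ξ => le_ciSup (hbdd ξ) x
  have hmax : ∀ ξ : PontryaginDual X, ∃ x : X, g ξ = ‖f x ξ‖ := by
    intro ξ
    obtain ⟨x, hx⟩ := (continuous_norm.comp (hcont ξ)).exists_forall_ge
      (by rw [Filter.cocompact_eq_bot]; exact tendsto_bot)
    exact ⟨x, le_antisymm (ciSup_le fun y => hx y) (hle_g x ξ)⟩
  choose xf hxf using hmax
  -- bounds on g
  have hgC : ∀ ξ, g ξ ≤ C := fun ξ => ciSup_le fun x => hC x ξ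
  have hg0 : ∀ ξ, 0 ≤ g ξ := fun ξ => le_trans (norm_nonneg _) (hle_g 1 ξ)
  have hbu : F.IsBoundedUnder (· ≤ ·) g := Filter.isBoundedUnder_of ⟨C, hgC⟩
  have hbl : F.IsBoundedUnder (· ≥ ·) g := Filter.isBoundedUnder_of ⟨0, hg0⟩
  have hcb : F.IsCoboundedUnder (· ≤ ·) g := hbl.isCoboundedUnder_le
  -- L is a cluster value of g along F
  have hclus : (F ⊓ Filter.comap g (𝓝 L)).NeBot := by
    rw [Filter.inf_neBot_iff]
    intro s hs t ht
    obtain ⟨u, hu, hut⟩ := Filter.mem_comap.1 ht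
    obtain ⟨ε, hε, hball⟩ := Metric.mem_nhds_iff.1 hu
    have h1 : ∃ᶠ ξ in F, L - ε < g ξ := by
      refine Filter.frequently_lt_of_lt_limsup hcb ?_
      rw [← hL]; linarith
    have h2 : ∀ᶠ ξ in F, g ξ < L + ε := by
      refine Filter.eventually_lt_of_limsup_lt ?_ hbu
      rw [← hL]; linarith
    obtain ⟨ξ, hξ1, hξ2, hξs⟩ := (h1.and_eventually (h2.and (Filter.eventually_mem_set.2 hs))).exists
    refine ⟨ξ, hξs, hut ?_⟩
    apply hball
    rw [Metric.mem_ball, Real.dist_eq, abs_sub_lt_iff]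
    constructor <;> linarith
  -- take an ultrafilter
  obtain ⟨𝒰, h𝒰⟩ := Filter.exists_ultrafilter_le (f := F ⊓ Filter.comap g (𝓝 L))
  have h𝒰F : (𝒰 : Filter (PontryaginDual X)) ≤ F := h𝒰.trans inf_le_left
  have h𝒰g : Filter.Tendsto g 𝒰 (𝓝 L) := Filter.tendsto_iff_comap.2 (h𝒰.trans inf_le_right)
  -- limit point of xf along 𝒰
  obtain ⟨x₀, -, hx₀⟩ := isCompact_univ.ultrafilter_le_nhds (𝒰.map xf)
    (by simp [Filter.le_principal_iff])
  have hxt : Filter.Tendsto xf 𝒰 (𝓝 x₀) := hx₀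
  refine ⟨x₀, 𝒰, h𝒰F, ?_⟩
  rw [Metric.tendsto_nhds]
  intro ε hε
  have h3 : ∀ᶠ ξ in (𝒰 : Filter (PontryaginDual X)), ∀ ξ' : PontryaginDual X, ‖f (xf ξ) ξ' - f x₀ ξ'‖ < ε / 3 :=
    hxt.eventually (hfc (ε / 3) (by linarith) x₀)
  have h4 : ∀ᶠ ξ in (𝒰 : Filter (PontryaginDual X)), dist (g ξ) L < ε / 3 :=
    h𝒰g (Metric.ball_mem_nhds L (by linarith))
  filter_upwards [h3, h4] with ξ h3ξ h4ξ
  rw [Real.dist_eq, abs_sub_lt_iff] at h4ξ ⊢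
  have e1 : ‖f (xf ξ) ξ - f x₀ ξ‖ < ε / 3 := h3ξ ξ
  have e2 : ‖f x₀ ξ‖ ≤ g ξ := hle_g x₀ ξ
  have e3 : g ξ - ε / 3 ≤ ‖f x₀ ξ‖ := by
    have h := abs_norm_sub_norm_le (f (xf ξ) ξ) (f x₀ ξ)
    rw [abs_sub_le_iff] at h
    rw [hxf ξ]
    linarith [h.1]
  exact ⟨by linarith [h4ξ.1], by linarith [h4ξ.2]⟩
end

section
/- Let Ω be invariant, ψ ∈ ℓ^{∞,Ω}(Ξ) and w ∈ ℓ²(Ξ). Then the ℓ²-norm ‖(ζ ↦ ψ(ξ₀ζ) · w(ζ))‖_{ℓ²(Ξ)} tends to 0 along the filter 𝓕_Ω (in the variable ξ₀ ∈ Ξ); that is, the multiplication operators by the translates of ψ converge strongly to 0 along 𝓕_Ω. -/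
open Filter Topology

/-- **Strong convergence of translated multiplication operators** (the key step in the
proof of Proposition 3.2).  For an invariant nonempty closed `Ω` in the corona of `βΞ`,
`ψ ∈ ℓ^{∞,Ω}(Ξ)` and `w ∈ ℓ²(Ξ)`: if `W ξ₀ ∈ ℓ²(Ξ)` is the pointwise product
`ζ ↦ ψ(ξ₀ζ)·w(ζ)`, then `‖W ξ₀‖ → 0` along the filter `𝓕_Ω` in the variable `ξ₀`. -/
theorem translated_multiplication_tendsto_zero
    {Ξ : Type} [CommGroup Ξ] [TopologicalSpace Ξ] [DiscreteTopology Ξ]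
    (Ω : Set (StoneCech Ξ)) (hΩne : Ω.Nonempty) (hΩcl : IsClosed Ω)
    (hΩcorona : Ω ⊆ (Set.range (stoneCechUnit : Ξ → StoneCech Ξ))ᶜ)
    (hΩinv : ∀ η : Ξ, stoneCechExtend (continuous_of_discreteTopology
        (f := fun ξ : Ξ => stoneCechUnit (η * ξ))) '' Ω ⊆ Ω)
    (ψ : Ξ → ℂ) (hψb : ∃ C, ∀ ξ, ‖ψ ξ‖ ≤ C)
    (hψ : Filter.limsup (fun ξ => ‖ψ ξ‖)
      (Filter.comap stoneCechUnit (𝓝ˢ Ω)) = 0)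
    (w : lp (fun _ : Ξ => ℂ) 2)
    (W : Ξ → lp (fun _ : Ξ => ℂ) 2)
    (hW : ∀ ξ₀ ζ : Ξ, W ξ₀ ζ = ψ (ξ₀ * ζ) * w ζ) :
    Filter.Tendsto (fun ξ₀ => ‖W ξ₀‖)
      (Filter.comap stoneCechUnit (𝓝ˢ Ω)) (𝓝 0) := by
  obtain ⟨C, hC⟩ := hψb
  set F := Filter.comap (stoneCechUnit : Ξ → StoneCech Ξ) (𝓝ˢ Ω) with hF
  -- translation maps F to itself
  have hθ : ∀ ζ : Ξ, Tendsto (fun ξ₀ : Ξ => ξ₀ * ζ) F F := by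
    intro ζ
    rw [hF, tendsto_comap_iff]
    have hcont : Continuous (fun ξ : Ξ => stoneCechUnit (ζ * ξ)) :=
      continuous_of_discreteTopology
    have h1 : ((stoneCechUnit : Ξ → StoneCech Ξ) ∘ fun ξ₀ : Ξ => ξ₀ * ζ) =
        (stoneCechExtend hcont) ∘ stoneCechUnit := by
      funext ξ₀
      show stoneCechUnit (ξ₀ * ζ) = _
      rw [mul_comm]
      exact (congrFun (stoneCechExtend_extends hcont) ξ₀).symm
    rw [h1]
    have hmaps : Set.MapsTo (stoneCechExtend hcont) Ω Ω := Set.mapsTo_iff_image_subset.2 (hΩinv ζ)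
    exact ((continuous_stoneCechExtend hcont).tendsto_nhdsSet hmaps).comp tendsto_comap
  -- |ψ| tends to 0 along F
  have hbdd : IsBoundedUnder (· ≤ ·) F (fun ξ => ‖ψ ξ‖) :=
    ⟨C, Filter.eventually_map.2 (Filter.Eventually.of_forall hC)⟩
  have htends0 : Tendsto (fun ξ => ‖ψ ξ‖) F (𝓝 0) := by
    rw [Metric.tendsto_nhds]
    intro ε hε
    have hlt : Filter.limsup (fun ξ => ‖ψ ξ‖) F < ε := by
      rw [hF, hψ]; exact hε
    filter_upwards [Filter.eventually_lt_of_limsup_lt hlt hbdd] with ξ h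
    rw [Real.dist_eq, sub_zero, abs_of_nonneg (norm_nonneg _)]
    exact h
  -- pointwise tendsto of squared terms
  have hterm : ∀ ζ : Ξ, Tendsto (fun ξ₀ => ‖W ξ₀ ζ‖ ^ (2 : ℝ)) F (𝓝 0) := by
    intro ζ
    have h1 : Tendsto (fun ξ₀ => ‖ψ (ξ₀ * ζ)‖) F (𝓝 0) :=
      htends0.comp (hθ ζ)
    have h2 : Tendsto (fun ξ₀ => ‖W ξ₀ ζ‖) F (𝓝 0) := by
      have : (fun ξ₀ => ‖W ξ₀ ζ‖) = fun ξ₀ => ‖ψ (ξ₀ * ζ)‖ * ‖w ζ‖ := by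
        funext ξ₀
        rw [hW ξ₀ ζ]
        simp [norm_mul]
      rw [this]
      simpa using h1.mul_const ‖w ζ‖
    have := (h2.rpow_const (p := 2) (Or.inr (by norm_num : (0:ℝ) ≤ 2)))
    simpa [Real.zero_rpow] using this
  -- summable bound
  have hw2 : Summable (fun ζ : Ξ => ‖w ζ‖ ^ (2 : ℝ)) := by
    have := (lp.memℓp w).summable (p := 2) (by norm_num)
    simpa using this
  have hbound : Summable (fun ζ : Ξ => C ^ (2 : ℝ) * ‖w ζ‖ ^ (2 : ℝ)) := hw2.mul_left _
  have hC0 : 0 ≤ C := le_trans (norm_nonneg _) (hC 1)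
  -- dominated convergence
  have hsum : Tendsto (fun ξ₀ => ∑' ζ, ‖W ξ₀ ζ‖ ^ (2 : ℝ)) F (𝓝 0) := by
    have := tendsto_tsum_of_dominated_convergence (𝓕 := F)
      (f := fun ξ₀ ζ => ‖W ξ₀ ζ‖ ^ (2 : ℝ)) (g := fun _ => 0)
      (bound := fun ζ => C ^ (2 : ℝ) * ‖w ζ‖ ^ (2 : ℝ)) hbound hterm ?_
    · simpa using this
    · refine Filter.Eventually.of_forall fun ξ₀ => fun ζ => ?_
      show ‖‖W ξ₀ ζ‖ ^ (2:ℝ)‖ ≤ C ^ (2:ℝ) * ‖w ζ‖ ^ (2:ℝ)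
      rw [Real.norm_eq_abs, abs_of_nonneg (Real.rpow_nonneg (norm_nonneg _) _)]
      rw [← Real.mul_rpow hC0 (norm_nonneg _)]
      refine Real.rpow_le_rpow (norm_nonneg _) ?_ (by norm_num)
      rw [hW ξ₀ ζ]
      calc ‖ψ (ξ₀ * ζ) * w ζ‖ = ‖ψ (ξ₀ * ζ)‖ * ‖w ζ‖ := by
            simp [norm_mul]
        _ ≤ C * ‖w ζ‖ := by
            exact mul_le_mul_of_nonneg_right (hC _) (norm_nonneg _)
  -- conclude via square root
  have hnorm : ∀ ξ₀, ‖W ξ₀‖ = Real.sqrt (∑' ζ, ‖W ξ₀ ζ‖ ^ (2 : ℝ)) := by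
    intro ξ₀
    have h := lp.norm_rpow_eq_tsum (p := 2) (by norm_num) (W ξ₀)
    have h2 : (2 : ENNReal).toReal = (2 : ℝ) := by norm_num
    rw [h2] at h
    rw [← h, show ((2:ℝ)) = ((2:ℕ):ℝ) by norm_num, Real.rpow_natCast,
      Real.sqrt_sq (norm_nonneg _)]
  have heq : (fun ξ₀ => ‖W ξ₀‖) = fun ξ₀ => Real.sqrt (∑' ζ, ‖W ξ₀ ζ‖ ^ (2 : ℝ)) :=
    funext hnorm
  rw [heq]
  simpa [Function.comp_def] using (Real.continuous_sqrt.tendsto 0).comp hsum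
end

section
/- Let ψ̇ : ℝ^N → ℂ be continuously differentiable and suppose that its gradient tends to 0 at infinity (i.e. ‖∇ψ̇(α)‖ → 0 as ‖α‖ → ∞). Then the restriction ψ of ψ̇ to ℤ^N has vanishing oscillation at infinity: for every ζ ∈ ℤ^N, ψ(ξ + ζ) − ψ(ξ) → 0 along the cofinite filter on ℤ^N. In particular, if ψ̇ is in addition bounded, then ψ ∈ vo^{δℤ^N}(ℤ^N). -/
open Filter Topology

def latticePt (N : ℕ) (ξ : Fin N → ℤ) : EuclideanSpace ℝ (Fin N) :=
  WithLp.toLp 2 (fun i => ((ξ i : ℤ) : ℝ))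

lemma euclid_coord_le_norm {N : ℕ} (x : EuclideanSpace ℝ (Fin N)) (i : Fin N) :
    |x i| ≤ ‖x‖ := by
  rw [EuclideanSpace.norm_eq]
  have h1 : |x i| = Real.sqrt (x i ^ 2) := by
    rw [Real.sqrt_sq_eq_abs]
  rw [h1]
  apply Real.sqrt_le_sqrt
  have := Finset.single_le_sum (f := fun j => x j ^ 2) (fun j _ => sq_nonneg (x j))
    (Finset.mem_univ i)
  simpa [sq_abs] using this

lemma finite_small_lattice {N : ℕ} (M : ℝ) :
    {ξ : Fin N → ℤ | ‖latticePt N ξ‖ < M}.Finite := by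
  apply Set.Finite.subset (Set.Finite.pi (fun i : Fin N =>
    Set.finite_Icc (-⌈M⌉) ⌈M⌉))
  intro ξ hξ
  simp only [Set.mem_setOf_eq] at hξ
  simp only [Set.mem_pi, Set.mem_univ, Set.mem_Icc, forall_true_left]
  intro i
  have h : |((ξ i : ℤ) : ℝ)| ≤ M :=
    le_of_lt (lt_of_le_of_lt (euclid_coord_le_norm (latticePt N ξ) i) hξ)
  rw [abs_le] at h
  constructor
  · have : -(M : ℝ) ≤ (ξ i : ℝ) := h.1
    have hM : ((-⌈M⌉ : ℤ) : ℝ) ≤ (ξ i : ℝ) := by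
      push_cast
      linarith [Int.le_ceil M]
    exact_mod_cast hM
  · have : ((ξ i : ℤ) : ℝ) ≤ ((⌈M⌉ : ℤ) : ℝ) := le_trans h.2 (Int.le_ceil M)
    exact_mod_cast this

/-- **Example 4.3 (`aladin`).**  If `ψ̇ : ℝ^N → ℂ` is continuously differentiable and its
gradient tends to `0` at infinity, then its restriction `ψ` to `ℤ^N` has vanishing
oscillation at infinity: for every `ζ ∈ ℤ^N`, `ψ(ξ + ζ) - ψ(ξ) → 0` along the cofinite
filter.  In particular, if `ψ̇` is in addition bounded, then `ψ ∈ vo^{δℤ^N}(ℤ^N)`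
(bounded with vanishing oscillation at infinity). -/
theorem restriction_of_C1_vanishing_gradient_has_vanishing_oscillation
    (N : ℕ) (ψd : EuclideanSpace ℝ (Fin N) → ℂ)
    (hC1 : ContDiff ℝ 1 ψd)
    (hgrad : ∀ ε > 0, ∃ R : ℝ, ∀ α : EuclideanSpace ℝ (Fin N),
      R ≤ ‖α‖ → ‖fderiv ℝ ψd α‖ < ε) :
    (∀ ζ : Fin N → ℤ,
      Filter.Tendsto (fun ξ : Fin N → ℤ =>
          ψd (WithLp.toLp 2 (fun i => ((ξ i + ζ i : ℤ) : ℝ))) - ψd (WithLp.toLp 2 (fun i => ((ξ i : ℤ) : ℝ))))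
        Filter.cofinite (𝓝 0)) ∧
    ((∃ C, ∀ α, ‖ψd α‖ ≤ C) →
      (∃ C, ∀ ξ : Fin N → ℤ, ‖ψd (WithLp.toLp 2 fun i => ((ξ i : ℤ) : ℝ))‖ ≤ C) ∧
      ∀ ζ : Fin N → ℤ,
        Filter.Tendsto (fun ξ : Fin N → ℤ =>
            ψd (WithLp.toLp 2 (fun i => ((ξ i + ζ i : ℤ) : ℝ))) - ψd (WithLp.toLp 2 (fun i => ((ξ i : ℤ) : ℝ))))
          Filter.cofinite (𝓝 0)) := by
  have hdiff : Differentiable ℝ ψd := hC1.differentiable one_ne_zero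
  have main : ∀ ζ : Fin N → ℤ,
      Filter.Tendsto (fun ξ : Fin N → ℤ =>
          ψd (WithLp.toLp 2 (fun i => ((ξ i + ζ i : ℤ) : ℝ))) - ψd (WithLp.toLp 2 (fun i => ((ξ i : ℤ) : ℝ))))
        Filter.cofinite (𝓝 0) := by
    intro ζ
    set v : EuclideanSpace ℝ (Fin N) := latticePt N ζ with hv
    rw [Metric.tendsto_nhds]
    intro ε hε
    have hεv : 0 < ε / (‖v‖ + 1) := by positivity
    obtain ⟨R, hR⟩ := hgrad (ε / (‖v‖ + 1)) hεv
    rw [Filter.eventually_cofinite]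
    apply Set.Finite.subset (finite_small_lattice (N := N) (R + ‖v‖))
    intro ξ hξ
    simp only [Set.mem_setOf_eq]
    by_contra hbig
    push_neg at hbig
    apply hξ
    set x : EuclideanSpace ℝ (Fin N) := latticePt N ξ with hx
    set y : EuclideanSpace ℝ (Fin N) := latticePt N (ξ + ζ) with hy
    have hyx : y = x + v := by
      ext i
      simp [hx, hy, hv, latticePt]
    -- mean value on segment
    have hseg : ∀ z ∈ segment ℝ x y, R ≤ ‖z‖ := by
      intro z hz
      rw [segment_eq_image'] at hz
      obtain ⟨θ, hθ, rfl⟩ := hz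
      have hyx' : y - x = v := by rw [hyx]; abel
      rw [hyx']
      have h1 : ‖θ • v‖ ≤ ‖v‖ := by
        rw [norm_smul, Real.norm_eq_abs, abs_of_nonneg hθ.1]
        nlinarith [norm_nonneg v, hθ.2]
      calc R = (R + ‖v‖) - ‖v‖ := by ring
        _ ≤ ‖x‖ - ‖θ • v‖ := by linarith [h1, hbig]
        _ ≤ ‖x + θ • v‖ := by
            have := norm_add_le (x + θ • v) (-(θ • v))
            simp at this
            linarith [abs_le.mp (abs_norm_sub_norm_le (x + θ • v) (x))|>.2,
              norm_sub_rev (x + θ • v) x]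
    have hconv : Convex ℝ (segment ℝ x y) := convex_segment x y
    have hbound := hconv.norm_image_sub_le_of_norm_fderiv_le
      (fun z _ => hdiff z) (fun z hz => le_of_lt (hR z (hseg z hz)))
      (left_mem_segment ℝ x y) (right_mem_segment ℝ x y)
    have hvy : ‖y - x‖ = ‖v‖ := by rw [hyx]; simp
    rw [hvy] at hbound
    have : ‖ψd y - ψd x‖ < ε := by
      calc ‖ψd y - ψd x‖ ≤ ε / (‖v‖ + 1) * ‖v‖ := hbound
        _ < ε := by
            rw [div_mul_eq_mul_div, div_lt_iff₀ (by positivity)]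
            nlinarith [norm_nonneg v]
    rw [dist_eq_norm, sub_zero]
    exact this
  refine ⟨main, fun ⟨C, hC⟩ => ⟨⟨C, fun ξ => hC _⟩, main⟩⟩
end
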